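/- arXiv:1303.6669 — 10 statements merged into one kernel-verified Lean document; each statement's English description precedes it below -/
import Mathlib

section
/- Let H be a real Hilbert space and let T : H → H be a nonexpansive mapping with Fix(T) ≠ ∅. Let (x_n), (y_n) be the Ishikawa iteration starting from any x_0 ∈ H. Then for all n ≥ 0, ‖T(x_{n+1}) − x_{n+1}‖ ≤ (1 + 4 t_n (1 − t_n) s_n) ‖T(x_n) − x_n‖. -/
open Filter

theorem stmt_4 (H : Type*) [NormedAddCommGroup H] [InnerProductSpace ℝ H] [CompleteSpace H]
    (T : H → H) (hT : ∀ x y : H, ‖T x - T y‖ ≤ ‖x - y‖)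
    (hF : ∃ p : H, T p = p)
    (t s : ℕ → ℝ) (ht : ∀ n, t n ∈ Set.Icc (0:ℝ) 1) (hs : ∀ n, s n ∈ Set.Icc (0:ℝ) 1)
    (x y : ℕ → H)
    (hy : ∀ n, y n = (1 - s n) • x n + s n • T (x n))
    (hx : ∀ n, x (n + 1) = (1 - t n) • x n + t n • T (y n)) :
    ∀ n, ‖T (x (n + 1)) - x (n + 1)‖ ≤ (1 + 4 * t n * (1 - t n) * s n) * ‖T (x n) - x n‖ := by
  intro n
  obtain ⟨ha0, ha1⟩ := ht n
  obtain ⟨hb0, hb1⟩ := hs n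
  set a := t n with hadef
  set b := s n with hbdef
  set d := ‖T (x n) - x n‖ with hd
  have hd0 : 0 ≤ d := norm_nonneg _
  have hyx : y n - x n = b • (T (x n) - x n) := by rw [hy n]; module
  have h1 : ‖y n - x n‖ = b * d := by
    rw [hyx, norm_smul, Real.norm_eq_abs, abs_of_nonneg hb0]
  have hTxy : T (x n) - y n = (1 - b) • (T (x n) - x n) := by rw [hy n]; module
  have h2 : ‖T (x n) - y n‖ = (1 - b) * d := by
    rw [hTxy, norm_smul, Real.norm_eq_abs, abs_of_nonneg (by linarith)]
  have h3 : ‖T (y n) - y n‖ ≤ d := by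
    calc ‖T (y n) - y n‖ = ‖(T (y n) - T (x n)) + (T (x n) - y n)‖ := by
          congr 1; abel
      _ ≤ ‖T (y n) - T (x n)‖ + ‖T (x n) - y n‖ := norm_add_le _ _
      _ ≤ ‖y n - x n‖ + ‖T (x n) - y n‖ := by linarith [hT (y n) (x n)]
      _ = b * d + (1 - b) * d := by rw [h1, h2]
      _ = d := by ring
  have h4 : ‖T (y n) - x n‖ ≤ (b + 1) * d := by
    calc ‖T (y n) - x n‖ = ‖(T (y n) - T (x n)) + (T (x n) - x n)‖ := by
          congr 1; abel
      _ ≤ ‖T (y n) - T (x n)‖ + ‖T (x n) - x n‖ := norm_add_le _ _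
      _ ≤ ‖y n - x n‖ + d := by linarith [hT (y n) (x n)]
      _ = (b + 1) * d := by rw [h1]; ring
  have hxy2 : x (n + 1) - y n = (1 - a) • (x n - y n) + a • (T (y n) - y n) := by
    rw [hx n]; module
  have h1' : ‖x n - y n‖ = b * d := by rw [norm_sub_rev, h1]
  have h5 : ‖x (n + 1) - y n‖ ≤ (1 - a) * (b * d) + a * d := by
    calc ‖x (n + 1) - y n‖ ≤ ‖(1 - a) • (x n - y n)‖ + ‖a • (T (y n) - y n)‖ := by
          rw [hxy2]; exact norm_add_le _ _
      _ = (1 - a) * ‖x n - y n‖ + a * ‖T (y n) - y n‖ := by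
          rw [norm_smul, norm_smul, Real.norm_eq_abs, Real.norm_eq_abs,
            abs_of_nonneg (by linarith : (0:ℝ) ≤ 1 - a), abs_of_nonneg ha0]
      _ ≤ (1 - a) * (b * d) + a * d := by
          rw [h1']
          have := mul_le_mul_of_nonneg_left h3 ha0
          linarith
  have hxx : x (n + 1) - x n = a • (T (y n) - x n) := by rw [hx n]; module
  have h6 : ‖x (n + 1) - x n‖ ≤ a * ((b + 1) * d) := by
    rw [hxx, norm_smul, Real.norm_eq_abs, abs_of_nonneg ha0]
    exact mul_le_mul_of_nonneg_left h4 ha0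
  have hkey : T (x (n + 1)) - x (n + 1) =
      (1 - a) • (T (x (n + 1)) - x n) + a • (T (x (n + 1)) - T (y n)) := by
    rw [hx n]; module
  have h7 : ‖T (x (n + 1)) - x n‖ ≤ a * ((b + 1) * d) + d := by
    calc ‖T (x (n + 1)) - x n‖
        = ‖(T (x (n + 1)) - T (x n)) + (T (x n) - x n)‖ := by congr 1; abel
      _ ≤ ‖T (x (n + 1)) - T (x n)‖ + d := norm_add_le _ _
      _ ≤ ‖x (n + 1) - x n‖ + d := by linarith [hT (x (n + 1)) (x n)]
      _ ≤ a * ((b + 1) * d) + d := by linarith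
  have h8 : ‖T (x (n + 1)) - T (y n)‖ ≤ (1 - a) * (b * d) + a * d :=
    le_trans (hT _ _) h5
  have hfinal : ‖T (x (n + 1)) - x (n + 1)‖ ≤
      (1 - a) * (a * ((b + 1) * d) + d) + a * ((1 - a) * (b * d) + a * d) := by
    calc ‖T (x (n + 1)) - x (n + 1)‖
        ≤ ‖(1 - a) • (T (x (n + 1)) - x n)‖ + ‖a • (T (x (n + 1)) - T (y n))‖ := by
          rw [hkey]; exact norm_add_le _ _
      _ = (1 - a) * ‖T (x (n + 1)) - x n‖ + a * ‖T (x (n + 1)) - T (y n)‖ := by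
          rw [norm_smul, norm_smul, Real.norm_eq_abs, Real.norm_eq_abs,
            abs_of_nonneg (by linarith : (0:ℝ) ≤ 1 - a), abs_of_nonneg ha0]
      _ ≤ (1 - a) * (a * ((b + 1) * d) + d) + a * ((1 - a) * (b * d) + a * d) := by
          have := mul_le_mul_of_nonneg_left h7 (by linarith : (0:ℝ) ≤ 1 - a)
          have := mul_le_mul_of_nonneg_left h8 ha0
          linarith
  have hprod : 0 ≤ a * (1 - a) * b * d := by
    have : (0:ℝ) ≤ 1 - a := by linarith
    exact mul_nonneg (mul_nonneg (mul_nonneg ha0 this) hb0) hd0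
  nlinarith [hfinal, hprod]
end

section
/- Let H be a real Hilbert space and let T : H → H be a nonexpansive mapping with Fix(T) ≠ ∅. Let (x_n), (y_n) be the Ishikawa iteration starting from any x_0 ∈ H. Then for all n ≥ 0, (1 − t_n) ‖T(x_{n+1}) − x_{n+1}‖ ≤ (1 − t_n + 2 t_n (1 − t_n) s_n) ‖T(x_n) − x_n‖. -/
open Filter

theorem stmt_5 (H : Type*) [NormedAddCommGroup H] [InnerProductSpace ℝ H] [CompleteSpace H]
    (T : H → H) (hT : ∀ x y : H, ‖T x - T y‖ ≤ ‖x - y‖)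
    (hF : ∃ p : H, T p = p)
    (t s : ℕ → ℝ) (ht : ∀ n, t n ∈ Set.Icc (0:ℝ) 1) (hs : ∀ n, s n ∈ Set.Icc (0:ℝ) 1)
    (x y : ℕ → H)
    (hy : ∀ n, y n = (1 - s n) • x n + s n • T (x n))
    (hx : ∀ n, x (n + 1) = (1 - t n) • x n + t n • T (y n)) :
    ∀ n, (1 - t n) * ‖T (x (n + 1)) - x (n + 1)‖ ≤ (1 - t n + 2 * t n * (1 - t n) * s n) * ‖T (x n) - x n‖ := by
  intro n
  obtain ⟨ht0, ht1⟩ := ht n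
  obtain ⟨hs0, hs1⟩ := hs n
  set a := t n with ha
  set b := s n with hb
  set D := ‖T (x n) - x n‖ with hD
  have hDnn : (0:ℝ) ≤ D := norm_nonneg _
  have e1 : y n - x n = b • (T (x n) - x n) := by rw [hy]; module
  have n1 : ‖y n - x n‖ = b * D := by
    rw [e1, norm_smul, Real.norm_of_nonneg hs0]
  have e2 : T (x n) - y n = (1 - b) • (T (x n) - x n) := by rw [hy]; module
  have n2 : ‖T (x n) - y n‖ = (1 - b) * D := by
    rw [e2, norm_smul, Real.norm_of_nonneg (by linarith)]
  have n3 : ‖T (y n) - x n‖ ≤ (1 + b) * D := by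
    calc ‖T (y n) - x n‖ ≤ ‖T (y n) - T (x n)‖ + ‖T (x n) - x n‖ :=
          norm_sub_le_norm_sub_add_norm_sub _ _ _
    _ ≤ ‖y n - x n‖ + D := add_le_add (hT _ _) le_rfl
    _ = (1 + b) * D := by rw [n1]; ring
  have n4 : ‖T (y n) - y n‖ ≤ D := by
    calc ‖T (y n) - y n‖ ≤ ‖T (y n) - T (x n)‖ + ‖T (x n) - y n‖ :=
          norm_sub_le_norm_sub_add_norm_sub _ _ _
    _ ≤ b * D + (1 - b) * D :=
          add_le_add (le_trans (hT _ _) (le_of_eq n1)) (le_of_eq n2)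
    _ = D := by ring
  have e5 : x (n + 1) - x n = a • (T (y n) - x n) := by rw [hx]; module
  have n5 : ‖x (n + 1) - x n‖ ≤ a * ((1 + b) * D) := by
    rw [e5, norm_smul, Real.norm_of_nonneg ht0]
    exact mul_le_mul_of_nonneg_left n3 ht0
  have e6 : x (n + 1) - y n = (1 - a) • (x n - y n) + a • (T (y n) - y n) := by
    rw [hx]; module
  have n6 : ‖x (n + 1) - y n‖ ≤ (1 - a) * (b * D) + a * D := by
    rw [e6]
    refine le_trans (norm_add_le _ _) ?_
    rw [norm_smul, norm_smul, Real.norm_of_nonneg (by linarith : (0:ℝ) ≤ 1 - a),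
      Real.norm_of_nonneg ht0, norm_sub_rev, n1]
    exact add_le_add le_rfl (mul_le_mul_of_nonneg_left n4 ht0)
  have e7 : T (x (n + 1)) - x (n + 1)
      = (1 - a) • (T (x (n + 1)) - x n) + a • (T (x (n + 1)) - T (y n)) := by
    rw [hx]; module
  have h7a : ‖T (x (n + 1)) - x n‖ ≤ ‖x (n + 1) - x n‖ + D := by
    calc ‖T (x (n + 1)) - x n‖ ≤ ‖T (x (n + 1)) - T (x n)‖ + ‖T (x n) - x n‖ :=
          norm_sub_le_norm_sub_add_norm_sub _ _ _
    _ ≤ ‖x (n + 1) - x n‖ + D := add_le_add (hT _ _) le_rfl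
  have h7b : ‖T (x (n + 1)) - T (y n)‖ ≤ ‖x (n + 1) - y n‖ := hT _ _
  have key : ‖T (x (n + 1)) - x (n + 1)‖
      ≤ (1 - a) * ‖T (x (n + 1)) - x n‖ + a * ‖T (x (n + 1)) - T (y n)‖ := by
    conv_lhs => rw [e7]
    refine le_trans (norm_add_le _ _) ?_
    rw [norm_smul, norm_smul, Real.norm_of_nonneg (by linarith : (0:ℝ) ≤ 1 - a),
      Real.norm_of_nonneg ht0]
  have hX : ‖T (x (n + 1)) - x n‖ ≤ a * ((1 + b) * D) + D := le_trans h7a (by linarith)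
  have hY : ‖T (x (n + 1)) - T (y n)‖ ≤ (1 - a) * (b * D) + a * D := le_trans h7b n6
  have n7 : ‖T (x (n + 1)) - x (n + 1)‖ ≤ (1 + 2 * a * (1 - a) * b) * D := by
    nlinarith [key, mul_le_mul_of_nonneg_left hX (by linarith : (0:ℝ) ≤ 1 - a),
      mul_le_mul_of_nonneg_left hY ht0]
  nlinarith [mul_le_mul_of_nonneg_left n7 (by linarith : (0:ℝ) ≤ 1 - a),
    mul_nonneg (mul_nonneg (mul_nonneg (mul_nonneg ht0 ht0) (by linarith : (0:ℝ) ≤ 1 - a)) hs0) hDnn]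
end

section
/- Let H be a real Hilbert space and let T : H → H be a nonexpansive mapping with Fix(T) ≠ ∅. Let (x_n), (y_n) be the Ishikawa iteration starting from any x_0 ∈ H. Then for all n ≥ 0, t_n ‖T(x_{n+1}) − x_{n+1}‖ ≤ (t_n + 2 t_n (1 − t_n) s_n) ‖T(x_n) − x_n‖. -/
open Filter

theorem stmt_6 (H : Type*) [NormedAddCommGroup H] [InnerProductSpace ℝ H] [CompleteSpace H]
    (T : H → H) (hT : ∀ x y : H, ‖T x - T y‖ ≤ ‖x - y‖)
    (hF : ∃ p : H, T p = p)
    (t s : ℕ → ℝ) (ht : ∀ n, t n ∈ Set.Icc (0:ℝ) 1) (hs : ∀ n, s n ∈ Set.Icc (0:ℝ) 1)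
    (x y : ℕ → H)
    (hy : ∀ n, y n = (1 - s n) • x n + s n • T (x n))
    (hx : ∀ n, x (n + 1) = (1 - t n) • x n + t n • T (y n)) :
    ∀ n, t n * ‖T (x (n + 1)) - x (n + 1)‖ ≤ (t n + 2 * t n * (1 - t n) * s n) * ‖T (x n) - x n‖ := by
  intro n
  obtain ⟨ht0, ht1⟩ := ht n
  obtain ⟨hs0, hs1⟩ := hs n
  have hyx : y n - x n = s n • (T (x n) - x n) := by rw [hy n]; module
  have hTyx : T (y n) - x (n + 1) = (1 - t n) • (T (y n) - x n) := by rw [hx n]; module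
  have hxy : x (n + 1) - y n
      = t n • (T (y n) - T (x n)) + (t n - s n) • (T (x n) - x n) := by
    rw [hx n, hy n]; module
  have a0 : (0:ℝ) ≤ ‖T (x n) - x n‖ := norm_nonneg _
  have hTy : ‖T (y n) - x n‖ ≤ s n * ‖T (x n) - x n‖ + ‖T (x n) - x n‖ := by
    calc ‖T (y n) - x n‖ ≤ ‖T (y n) - T (x n)‖ + ‖T (x n) - x n‖ :=
          norm_sub_le_norm_sub_add_norm_sub _ _ _
      _ ≤ ‖y n - x n‖ + ‖T (x n) - x n‖ := by linarith [hT (y n) (x n)]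
      _ = s n * ‖T (x n) - x n‖ + ‖T (x n) - x n‖ := by
          rw [hyx, norm_smul, Real.norm_eq_abs, abs_of_nonneg hs0]
  have h1 : ‖T (x (n + 1)) - x (n + 1)‖ ≤ ‖x (n + 1) - y n‖ + ‖T (y n) - x (n + 1)‖ := by
    calc ‖T (x (n + 1)) - x (n + 1)‖
        ≤ ‖T (x (n + 1)) - T (y n)‖ + ‖T (y n) - x (n + 1)‖ :=
          norm_sub_le_norm_sub_add_norm_sub _ _ _
      _ ≤ _ := by linarith [hT (x (n + 1)) (y n)]
  have h2 : ‖T (y n) - x (n + 1)‖ = (1 - t n) * ‖T (y n) - x n‖ := by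
    rw [hTyx, norm_smul, Real.norm_eq_abs, abs_of_nonneg (by linarith)]
  have h3 : ‖x (n + 1) - y n‖ ≤ (t n * s n + |t n - s n|) * ‖T (x n) - x n‖ := by
    rw [hxy]
    calc ‖t n • (T (y n) - T (x n)) + (t n - s n) • (T (x n) - x n)‖
        ≤ ‖t n • (T (y n) - T (x n))‖ + ‖(t n - s n) • (T (x n) - x n)‖ := norm_add_le _ _
      _ = t n * ‖T (y n) - T (x n)‖ + |t n - s n| * ‖T (x n) - x n‖ := by
          rw [norm_smul, norm_smul, Real.norm_eq_abs, Real.norm_eq_abs, abs_of_nonneg ht0]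
      _ ≤ t n * ‖y n - x n‖ + |t n - s n| * ‖T (x n) - x n‖ := by
          have := hT (y n) (x n); nlinarith
      _ = (t n * s n + |t n - s n|) * ‖T (x n) - x n‖ := by
          rw [hyx, norm_smul, Real.norm_eq_abs, abs_of_nonneg hs0]; ring
  have hTy0 : (0:ℝ) ≤ ‖T (y n) - x n‖ := norm_nonneg _
  have h4 : (1 - t n) * ‖T (y n) - x n‖
      ≤ (1 - t n) * (s n * ‖T (x n) - x n‖ + ‖T (x n) - x n‖) :=
    mul_le_mul_of_nonneg_left hTy (by linarith)
  have key : ‖T (x (n + 1)) - x (n + 1)‖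
      ≤ (1 + s n - t n + |t n - s n|) * ‖T (x n) - x n‖ := by nlinarith [h1, h2, h3, h4]
  rcases abs_cases (t n - s n) with ⟨hab, hab'⟩ | ⟨hab, hab'⟩
  · rw [hab] at key
    have h5 := mul_le_mul_of_nonneg_left key ht0
    have h6 : (0:ℝ) ≤ t n * ((1 - t n) * (s n * ‖T (x n) - x n‖)) :=
      mul_nonneg ht0 (mul_nonneg (by linarith) (mul_nonneg hs0 a0))
    nlinarith [h5, h6]
  · rw [hab] at key
    have h5 := mul_le_mul_of_nonneg_left key ht0
    have h6 : (0:ℝ) ≤ t n * (t n * ((1 - s n) * ‖T (x n) - x n‖)) :=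
      mul_nonneg ht0 (mul_nonneg ht0 (mul_nonneg (by linarith) a0))
    nlinarith [h5, h6]
end

section
/- Let H be a real Hilbert space and let T : H → H be a nonexpansive mapping with Fix(T) ≠ ∅. Let (x_n), (y_n) be the Ishikawa iteration starting from any x_0 ∈ H. Then for every p ∈ Fix(T) and every n ≥ 0, ‖x_{n+1} − p‖² ≤ ‖x_n − p‖² − t_n (1 − t_n) ‖T(y_n) − x_n‖². -/
open Filter

lemma convex_norm_sq_identity {H : Type*} [NormedAddCommGroup H] [InnerProductSpace ℝ H]
    (a b : H) (t : ℝ) :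
    ‖(1 - t) • a + t • b‖ ^ 2 = (1 - t) * ‖a‖ ^ 2 + t * ‖b‖ ^ 2 - t * (1 - t) * ‖a - b‖ ^ 2 := by
  have h : ∀ u : H, ‖u‖ ^ 2 = inner ℝ u u := fun u => (real_inner_self_eq_norm_sq u).symm
  rw [h, h, h, h]
  simp only [inner_add_add_self, inner_sub_sub_self, real_inner_smul_left, real_inner_smul_right,
    real_inner_comm a b]
  ring

theorem stmt_7 (H : Type*) [NormedAddCommGroup H] [InnerProductSpace ℝ H] [CompleteSpace H]
    (T : H → H) (hT : ∀ x y : H, ‖T x - T y‖ ≤ ‖x - y‖)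
    (hF : ∃ p : H, T p = p)
    (t s : ℕ → ℝ) (ht : ∀ n, t n ∈ Set.Icc (0:ℝ) 1) (hs : ∀ n, s n ∈ Set.Icc (0:ℝ) 1)
    (x y : ℕ → H)
    (hy : ∀ n, y n = (1 - s n) • x n + s n • T (x n))
    (hx : ∀ n, x (n + 1) = (1 - t n) • x n + t n • T (y n)) :
    ∀ p : H, T p = p → ∀ n, ‖x (n + 1) - p‖ ^ 2 ≤ ‖x n - p‖ ^ 2 - t n * (1 - t n) * ‖T (y n) - x n‖ ^ 2 := by
  intro p hp n
  obtain ⟨ht0, ht1⟩ := ht n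
  obtain ⟨hs0, hs1⟩ := hs n
  -- ‖y n - p‖ ≤ ‖x n - p‖
  have hyp : ‖y n - p‖ ≤ ‖x n - p‖ := by
    have : y n - p = (1 - s n) • (x n - p) + s n • (T (x n) - p) := by
      rw [hy n]; module
    rw [this]
    calc ‖(1 - s n) • (x n - p) + s n • (T (x n) - p)‖
        ≤ ‖(1 - s n) • (x n - p)‖ + ‖s n • (T (x n) - p)‖ := norm_add_le _ _
      _ = (1 - s n) * ‖x n - p‖ + s n * ‖T (x n) - p‖ := by
          rw [norm_smul, norm_smul, Real.norm_of_nonneg (by linarith), Real.norm_of_nonneg hs0]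
      _ ≤ (1 - s n) * ‖x n - p‖ + s n * ‖x n - p‖ := by
          have := hT (x n) p; rw [hp] at this
          nlinarith
      _ = ‖x n - p‖ := by ring
  have hTy : ‖T (y n) - p‖ ≤ ‖x n - p‖ := by
    have := hT (y n) p; rw [hp] at this; linarith
  have hdecomp : x (n + 1) - p = (1 - t n) • (x n - p) + t n • (T (y n) - p) := by
    rw [hx n]; module
  have key := convex_norm_sq_identity (x n - p) (T (y n) - p) (t n)
  rw [hdecomp, key]
  have hsub : (x n - p) - (T (y n) - p) = -(T (y n) - x n) := by abel
  rw [hsub, norm_neg]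
  nlinarith [mul_le_mul_of_nonneg_left (pow_le_pow_left₀ (norm_nonneg (T (y n) - p)) hTy 2) ht0]
end

section
/- Let H be a real Hilbert space and let T : H → H be a nonexpansive mapping with Fix(T) ≠ ∅. Suppose the sequences (t_n), (s_n) in [0,1] satisfy ∑_{n=0}^∞ t_n (1 − t_n) = ∞ and ∑_{n=0}^∞ t_n (1 − t_n) s_n < ∞. Let (x_n), (y_n) be the Ishikawa iteration starting from any x_0 ∈ H. Then lim_{n→∞} ‖T(x_n) − x_n‖ = 0. -/
open Filter

private lemma hilbert_id {H : Type*} [NormedAddCommGroup H] [InnerProductSpace ℝ H]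
    (a b : H) (θ : ℝ) :
    ‖(1 - θ) • a + θ • b‖ ^ 2
      = (1 - θ) * ‖a‖ ^ 2 + θ * ‖b‖ ^ 2 - θ * (1 - θ) * ‖a - b‖ ^ 2 := by
  rw [norm_add_sq_real, norm_sub_sq_real, norm_smul, norm_smul,
    real_inner_smul_left, real_inner_smul_right, mul_pow, mul_pow,
    Real.norm_eq_abs, Real.norm_eq_abs, sq_abs, sq_abs]
  ring

set_option maxHeartbeats 1000000 in
theorem stmt_10 (H : Type*) [NormedAddCommGroup H] [InnerProductSpace ℝ H] [CompleteSpace H]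
    (T : H → H) (hT : ∀ x y : H, ‖T x - T y‖ ≤ ‖x - y‖)
    (hF : ∃ p : H, T p = p)
    (t s : ℕ → ℝ) (ht : ∀ n, t n ∈ Set.Icc (0:ℝ) 1) (hs : ∀ n, s n ∈ Set.Icc (0:ℝ) 1)
    (x y : ℕ → H)
    (hy : ∀ n, y n = (1 - s n) • x n + s n • T (x n))
    (hx : ∀ n, x (n + 1) = (1 - t n) • x n + t n • T (y n))
    (hdiv : Tendsto (fun N => ∑ n ∈ Finset.range N, t n * (1 - t n)) atTop atTop)
    (hconv : Summable (fun n => t n * (1 - t n) * s n)) :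
    Tendsto (fun n => ‖T (x n) - x n‖) atTop (nhds 0) := by
  obtain ⟨p, hp⟩ := hF
  -- abbreviations
  set c : ℕ → ℝ := fun n => ‖T (x n) - x n‖ with hc
  set d : ℕ → ℝ := fun n => ‖x n - T (y n)‖ with hd
  set w : ℕ → ℝ := fun n => t n * (1 - t n) with hw
  set r : ℕ → ℝ := fun n => ‖x n - p‖ with hr
  have ht0 : ∀ n, 0 ≤ t n := fun n => (ht n).1
  have ht1 : ∀ n, t n ≤ 1 := fun n => (ht n).2
  have hs0 : ∀ n, 0 ≤ s n := fun n => (hs n).1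
  have hs1 : ∀ n, s n ≤ 1 := fun n => (hs n).2
  have hw0 : ∀ n, 0 ≤ w n := fun n => mul_nonneg (ht0 n) (by linarith [ht1 n])
  have hc0 : ∀ n, 0 ≤ c n := fun n => norm_nonneg _
  have hd0 : ∀ n, 0 ≤ d n := fun n => norm_nonneg _
  have hr0 : ∀ n, 0 ≤ r n := fun n => norm_nonneg _
  have hT1 : ∀ q : H, ‖T q - p‖ ≤ ‖q - p‖ := fun q => by
    have := hT q p; rwa [hp] at this
  -- vector identities
  have vy : ∀ n, y n - p = (1 - s n) • (x n - p) + s n • (T (x n) - p) := by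
    intro n; rw [hy n]; module
  have vyx : ∀ n, x n - y n = s n • (x n - T (x n)) := by
    intro n; rw [hy n]; module
  have vx : ∀ n, x (n+1) - p = (1 - t n) • (x n - p) + t n • (T (y n) - p) := by
    intro n; rw [hx n]; module
  have vxx : ∀ n, x (n+1) - x n = t n • (T (y n) - x n) := by
    intro n; rw [hx n]; module
  have vxty : ∀ n, x (n+1) - T (y n) = (1 - t n) • (x n - T (y n)) := by
    intro n; rw [hx n]; module
  have vxy : ∀ n, x (n+1) - y n
      = (s n - t n) • (x n - T (x n)) + t n • (T (y n) - T (x n)) := by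
    intro n; rw [hx n, hy n]; module
  -- ‖y n - p‖ ≤ r n
  have hy_le : ∀ n, ‖y n - p‖ ≤ r n := by
    intro n
    have hid : ‖y n - p‖^2 = (1 - s n) * ‖x n - p‖^2 + s n * ‖T (x n) - p‖^2
        - s n * (1 - s n) * ‖(x n - p) - (T (x n) - p)‖^2 := by
      rw [vy n]; exact hilbert_id _ _ _
    have hsub : (x n - p) - (T (x n) - p) = x n - T (x n) := by abel
    rw [hsub] at hid
    have h1 : ‖T (x n) - p‖ ≤ r n := hT1 (x n)
    have h1' : ‖T (x n) - p‖^2 ≤ r n^2 := by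
      nlinarith [norm_nonneg (T (x n) - p), hr0 n]
    have h2 : ‖y n - p‖^2 ≤ r n^2 := by
      nlinarith [hs0 n, hs1 n, sq_nonneg ‖x n - T (x n)‖,
        mul_nonneg (mul_nonneg (hs0 n) (by linarith [hs1 n] : (0:ℝ) ≤ 1 - s n))
          (sq_nonneg ‖x n - T (x n)‖)]
    nlinarith [norm_nonneg (y n - p), hr0 n]
  -- key decrease inequality
  have key : ∀ n, r (n+1)^2 ≤ r n^2 - w n * d n^2 := by
    intro n
    show r (n+1)^2 ≤ r n^2 - t n * (1 - t n) * ‖x n - T (y n)‖^2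
    have hid : r (n+1)^2 = (1 - t n) * ‖x n - p‖^2 + t n * ‖T (y n) - p‖^2
        - t n * (1 - t n) * ‖(x n - p) - (T (y n) - p)‖^2 := by
      show ‖x (n+1) - p‖^2 = _
      rw [vx n]; exact hilbert_id _ _ _
    have hsub : (x n - p) - (T (y n) - p) = x n - T (y n) := by abel
    rw [hsub] at hid
    have h1 : ‖T (y n) - p‖ ≤ r n := (hT1 (y n)).trans (hy_le n)
    have h1' : ‖T (y n) - p‖^2 ≤ r n^2 := by
      nlinarith [norm_nonneg (T (y n) - p), hr0 n]
    nlinarith [ht0 n, ht1 n]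
  -- r is antitone, hence r n ≤ r 0
  have hrmono : ∀ n, r n ≤ r 0 := by
    intro n
    induction n with
    | zero => exact le_refl _
    | succ k ih =>
      have h1 : r (k+1)^2 ≤ r k^2 := by
        have h := key k
        nlinarith [mul_nonneg (hw0 k) (sq_nonneg (d k))]
      have : r (k+1) ≤ r k := by nlinarith [hr0 k, hr0 (k+1)]
      linarith
  have hcR : ∀ n, c n ≤ 2 * r 0 := by
    intro n
    have h1 : c n ≤ ‖T (x n) - p‖ + ‖p - x n‖ := norm_sub_le_norm_sub_add_norm_sub _ _ _
    have h2 : ‖p - x n‖ = r n := norm_sub_rev _ _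
    have := hT1 (x n)
    have := hrmono n
    linarith

  -- summability of w * d^2
  have hwd2 : Summable (fun n => w n * d n ^ 2) := by
    apply summable_of_sum_range_le
      (c := r 0 ^ 2)
      (fun n => mul_nonneg (hw0 n) (sq_nonneg _))
    intro N
    have htel : ∑ i ∈ Finset.range N, (r i ^ 2 - r (i+1) ^ 2) = r 0 ^ 2 - r N ^ 2 :=
      Finset.sum_range_sub' (fun i => r i ^ 2) N
    have hle : ∑ i ∈ Finset.range N, w i * d i ^ 2
        ≤ ∑ i ∈ Finset.range N, (r i ^ 2 - r (i+1) ^ 2) := by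
      apply Finset.sum_le_sum
      intro i _
      have := key i
      linarith
    have : (0:ℝ) ≤ r N ^ 2 := sq_nonneg _
    linarith
  -- summability of w * s
  have hws : Summable (fun n => w n * s n) := hconv
  -- (1 - s n) * c n ≤ d n
  have hCd : ∀ n, (1 - s n) * c n ≤ d n := by
    intro n
    have h1 : c n ≤ ‖T (x n) - T (y n)‖ + ‖T (y n) - x n‖ :=
      norm_sub_le_norm_sub_add_norm_sub _ _ _
    have h2 : ‖T (x n) - T (y n)‖ ≤ ‖x n - y n‖ := hT _ _
    have h3 : ‖x n - y n‖ = s n * c n := by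
      rw [vyx n, norm_smul, Real.norm_eq_abs, abs_of_nonneg (hs0 n), norm_sub_rev]
    have h4 : ‖T (y n) - x n‖ = d n := norm_sub_rev _ _
    rw [h3] at h2
    rw [h4] at h1
    linarith
  -- d n ≤ (1 + s n) * c n
  have hdc : ∀ n, d n ≤ c n + s n * c n := by
    intro n
    have h1 : d n ≤ ‖x n - T (x n)‖ + ‖T (x n) - T (y n)‖ :=
      norm_sub_le_norm_sub_add_norm_sub _ _ _
    have h2 : ‖T (x n) - T (y n)‖ ≤ ‖x n - y n‖ := hT _ _
    have h3 : ‖x n - y n‖ = s n * c n := by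
      rw [vyx n, norm_smul, Real.norm_eq_abs, abs_of_nonneg (hs0 n), norm_sub_rev]
    have h4 : ‖x n - T (x n)‖ = c n := norm_sub_rev _ _
    rw [h3] at h2
    rw [h4] at h1
    linarith
  -- summability of w * c^2
  have hwc2 : Summable (fun n => w n * c n ^ 2) := by
    have hbound : ∀ n, w n * c n ^ 2 ≤ w n * d n ^ 2 + (8 * r 0 ^ 2) * (w n * s n) := by
      intro n
      have h1 : ((1 - s n) * c n) ^ 2 ≤ d n ^ 2 := by
        have h0 : 0 ≤ (1 - s n) * c n := mul_nonneg (by linarith [hs1 n]) (hc0 n)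
        nlinarith [hCd n, hd0 n]
      have hc2 : c n ^ 2 ≤ 4 * r 0 ^ 2 := by nlinarith [hcR n, hc0 n, hr0 0]
      have hid2 : w n * c n ^ 2
          = w n * ((1 - s n) * c n) ^ 2 + 2 * (w n * s n * c n ^ 2)
            - w n * s n ^ 2 * c n ^ 2 := by ring
      have hP : w n * ((1 - s n) * c n) ^ 2 ≤ w n * d n ^ 2 :=
        mul_le_mul_of_nonneg_left h1 (hw0 n)
      have hU : w n * s n * c n ^ 2 ≤ w n * s n * (4 * r 0 ^ 2) :=
        mul_le_mul_of_nonneg_left hc2 (mul_nonneg (hw0 n) (hs0 n))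
      have hV : 0 ≤ w n * s n ^ 2 * c n ^ 2 :=
        mul_nonneg (mul_nonneg (hw0 n) (sq_nonneg _)) (sq_nonneg _)
      linarith
    exact Summable.of_nonneg_of_le (fun n => mul_nonneg (hw0 n) (sq_nonneg _))
      hbound (hwd2.add (hws.mul_left _))

  -- step estimate (a): c (n+1) ≤ c n + 2 t_n d_n
  have hEa : ∀ n, c (n+1) ≤ c n + 2 * (t n * d n) := by
    intro n
    have hxxn : ‖x (n+1) - x n‖ = t n * d n := by
      rw [vxx n, norm_smul, Real.norm_eq_abs, abs_of_nonneg (ht0 n), norm_sub_rev]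
    have hdecomp : T (x (n+1)) - x (n+1)
        = (T (x (n+1)) - T (x n)) + (T (x n) - x n) + (x n - x (n+1)) := by abel
    have h1 : c (n+1) ≤ ‖T (x (n+1)) - T (x n)‖ + ‖T (x n) - x n‖ + ‖x n - x (n+1)‖ :=
      calc c (n+1)
          = ‖(T (x (n+1)) - T (x n)) + (T (x n) - x n) + (x n - x (n+1))‖ :=
            congrArg norm hdecomp
        _ ≤ ‖(T (x (n+1)) - T (x n)) + (T (x n) - x n)‖ + ‖x n - x (n+1)‖ :=
            norm_add_le _ _
        _ ≤ ‖T (x (n+1)) - T (x n)‖ + ‖T (x n) - x n‖ + ‖x n - x (n+1)‖ :=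
            add_le_add_left (norm_add_le _ _) _
    have h2 : ‖T (x (n+1)) - T (x n)‖ ≤ t n * d n := by
      have := hT (x (n+1)) (x n); rw [hxxn] at this; exact this
    have h3 : ‖x n - x (n+1)‖ = t n * d n := by rw [norm_sub_rev]; exact hxxn
    rw [h3] at h1
    linarith
  -- step estimate (b): c (n+1) ≤ (1-t)d + |s-t|c + t s c
  have hEb : ∀ n, c (n+1) ≤ (1 - t n) * d n + |s n - t n| * c n + t n * (s n * c n) := by
    intro n
    have hyxn : ‖y n - x n‖ = s n * c n := by
      rw [norm_sub_rev, vyx n, norm_smul, Real.norm_eq_abs, abs_of_nonneg (hs0 n),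
        norm_sub_rev]
    have hTxy : ‖T (y n) - T (x n)‖ ≤ s n * c n := by
      have := hT (y n) (x n); rw [hyxn] at this; exact this
    have e1 : ‖(s n - t n) • (x n - T (x n))‖ = |s n - t n| * c n := by
      rw [norm_smul, Real.norm_eq_abs, norm_sub_rev]
    have e2 : ‖t n • (T (y n) - T (x n))‖ ≤ t n * (s n * c n) := by
      rw [norm_smul, Real.norm_eq_abs, abs_of_nonneg (ht0 n)]
      exact mul_le_mul_of_nonneg_left hTxy (ht0 n)
    have h2 : ‖x (n+1) - y n‖ ≤ |s n - t n| * c n + t n * (s n * c n) := by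
      calc ‖x (n+1) - y n‖
          = ‖(s n - t n) • (x n - T (x n)) + t n • (T (y n) - T (x n))‖ :=
            congrArg norm (vxy n)
        _ ≤ ‖(s n - t n) • (x n - T (x n))‖ + ‖t n • (T (y n) - T (x n))‖ :=
            norm_add_le _ _
        _ ≤ |s n - t n| * c n + t n * (s n * c n) := by rw [e1]; linarith
    have h3 : ‖T (y n) - x (n+1)‖ = (1 - t n) * d n := by
      rw [norm_sub_rev, vxty n, norm_smul, Real.norm_eq_abs,
        abs_of_nonneg (by linarith [ht1 n] : (0:ℝ) ≤ 1 - t n)]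
    have h0 : c (n+1) ≤ ‖T (x (n+1)) - T (y n)‖ + ‖T (y n) - x (n+1)‖ :=
      norm_sub_le_norm_sub_add_norm_sub _ _ _
    have h4 : ‖T (x (n+1)) - T (y n)‖ ≤ ‖x (n+1) - y n‖ := hT _ _
    rw [h3] at h0
    linarith
  -- combined step estimate
  have hstep : ∀ n, c (n+1) ≤ c n + 8 * (w n * c n) + 8 * (w n * s n * c n) := by
    intro n
    have hwc_nn : 0 ≤ w n * c n := mul_nonneg (hw0 n) (hc0 n)
    have hwsc_nn : 0 ≤ w n * s n * c n :=
      mul_nonneg (mul_nonneg (hw0 n) (hs0 n)) (hc0 n)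
    rcases le_or_gt (t n) (1/2) with h | h
    · have htw : t n ≤ 2 * w n := by
        show t n ≤ 2 * (t n * (1 - t n))
        nlinarith [ht0 n]
      have hB : t n * d n ≤ t n * (c n + s n * c n) :=
        mul_le_mul_of_nonneg_left (hdc n) (ht0 n)
      have hC : 0 ≤ (2 * w n - t n) * (c n * (1 + s n)) :=
        mul_nonneg (by linarith) (mul_nonneg (hc0 n) (by linarith [hs0 n]))
      have hA := hEa n
      nlinarith [hwc_nn, hwsc_nn]
    · have hEb' := hEb n
      have hd5 : (1 - t n) * d n ≤ (1 - t n) * (c n + s n * c n) :=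
        mul_le_mul_of_nonneg_left (hdc n) (by linarith [ht1 n])
      rcases le_total (s n) (t n) with hst | hst
      · rw [abs_of_nonpos (by linarith)] at hEb'
        nlinarith [hwc_nn, hwsc_nn]
      · rw [abs_of_nonneg (by linarith)] at hEb'
        have h6 : s n - t n ≤ 4 * (w n * s n) := by
          show s n - t n ≤ 4 * (t n * (1 - t n) * s n)
          have hq1 : (0:ℝ) ≤ (t n - 1/2) * (s n - 1/2) :=
            mul_nonneg (by linarith) (by linarith)
          have hq2 : (0:ℝ) ≤ 4 * (t n * s n) - 1 := by nlinarith
          have hq3 : (0:ℝ) ≤ (1 - t n) * (4 * (t n * s n) - 1) :=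
            mul_nonneg (by linarith [ht1 n]) hq2
          nlinarith [ht1 n, hs1 n]
        have h7 : (s n - t n) * c n ≤ 4 * (w n * s n) * c n :=
          mul_le_mul_of_nonneg_right h6 (hc0 n)
        nlinarith [hwc_nn, hwsc_nn]

  -- main estimate: for every positive ε, eventually c n ≤ 6ε
  have main : ∀ ε : ℝ, 0 < ε → ∃ N, ∀ n, N ≤ n → c n ≤ 6 * ε := by
    intro ε hε
    set G : ℕ → ℝ := fun n => (8/ε) * (w n * c n ^ 2) + (16 * r 0) * (w n * s n) with hG
    have hG0 : ∀ n, 0 ≤ G n := by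
      intro n
      have := mul_nonneg (hw0 n) (sq_nonneg (c n))
      have := mul_nonneg (hw0 n) (hs0 n)
      have := hr0 0
      have h8ε : (0:ℝ) ≤ 8/ε := by positivity
      show 0 ≤ (8/ε) * (w n * c n ^ 2) + (16 * r 0) * (w n * s n)
      nlinarith
    have hGsum : Summable G := (hwc2.mul_left (8/ε)).add (hws.mul_left (16 * r 0))
    set S : ℕ → ℝ := fun N => ∑ k ∈ Finset.range N, G k with hS
    have hScauchy : CauchySeq S := (hGsum.hasSum.tendsto_sum_nat).cauchySeq
    obtain ⟨N₀, hN₀⟩ := Metric.cauchySeq_iff'.1 hScauchy ε hε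
    have hSmono : Monotone S := by
      intro a b hab
      apply Finset.sum_le_sum_of_subset_of_nonneg (Finset.range_subset_range.2 hab)
      intro i _ _; exact hG0 i
    have htail : ∀ m n, N₀ ≤ m → m ≤ n → ∑ k ∈ Finset.Ico m n, G k ≤ ε := by
      intro m n hm hmn
      have h1 : ∑ k ∈ Finset.Ico m n, G k = S n - S m :=
        Finset.sum_Ico_eq_sub _ hmn
      have h2 := hN₀ n (hm.trans hmn)
      have h3 : S N₀ ≤ S m := hSmono hm
      rw [Real.dist_eq] at h2
      have h4 := abs_lt.1 h2
      linarith [h4.1, h4.2]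
    have hexists : ∃ m, N₀ ≤ m ∧ c m ≤ ε := by
      by_contra hcon
      push_neg at hcon
      have hwsum : Summable w := by
        have hptw : ∀ n : ℕ, w (n + N₀) ≤ (1/ε^2) * (w (n + N₀) * c (n + N₀) ^ 2) := by
          intro n
          have hc' := hcon (n + N₀) (Nat.le_add_left _ _)
          have hq : ε^2 * w (n+N₀) ≤ w (n+N₀) * c (n+N₀)^2 := by
            have hfac : (0:ℝ) ≤ (c (n+N₀) - ε) * (c (n+N₀) + ε) :=
              mul_nonneg (by linarith) (by linarith [hc0 (n+N₀)])
            nlinarith [hw0 (n+N₀), mul_nonneg (hw0 (n+N₀)) hfac]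
          calc w (n+N₀) = (1/ε^2) * (ε^2 * w (n+N₀)) := by field_simp
            _ ≤ (1/ε^2) * (w (n+N₀) * c (n+N₀)^2) :=
                mul_le_mul_of_nonneg_left hq (by positivity)
        have h1 : Summable (fun n => w (n + N₀)) :=
          Summable.of_nonneg_of_le (fun n => hw0 _) hptw
            (((summable_nat_add_iff N₀).2 hwc2).mul_left _)
        exact (summable_nat_add_iff N₀).1 h1
      have hbdd : ∀ N : ℕ, (Finset.range N).sum w ≤ ∑' n, w n := fun N =>
        Summable.sum_le_tsum _ (fun i _ => hw0 i) hwsum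
      obtain ⟨N, hN⟩ := (hdiv.eventually_ge_atTop (∑' n, w n + 1)).exists
      linarith [hbdd N]
    obtain ⟨m, hmN₀, hcm⟩ := hexists
    have claim : ∀ n, m ≤ n → c n ≤ 5 * ε + ∑ k ∈ Finset.Ico m n, G k := by
      intro n hn
      induction n, hn using Nat.le_induction with
      | base => simp; linarith
      | succ n hn ih =>
        have hsum_succ : ∑ k ∈ Finset.Ico m (n+1), G k
            = (∑ k ∈ Finset.Ico m n, G k) + G n := Finset.sum_Ico_succ_top hn _
        have hGn0 := hG0 n
        have hsum0 : 0 ≤ ∑ k ∈ Finset.Ico m n, G k :=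
          Finset.sum_nonneg (fun i _ => hG0 i)
        have hst := hstep n
        have hw14 : w n ≤ 1/4 := by
          show t n * (1 - t n) ≤ 1/4
          nlinarith [sq_nonneg (1 - 2*t n)]
        rcases le_or_gt (c n) ε with hcn | hcn
        · have h8wc : 8 * (w n * c n) ≤ 2 * c n := by nlinarith [hc0 n, hw0 n]
          have h8wsc : 8 * (w n * s n * c n) ≤ 2 * c n := by
            nlinarith [hc0 n, hs1 n, hs0 n, mul_nonneg (hw0 n) (hc0 n), hw0 n]
          rw [hsum_succ]; linarith
        · have h1 : 8 * (w n * c n) ≤ (8/ε) * (w n * c n ^ 2) := by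
            rw [div_mul_eq_mul_div, le_div_iff₀ hε]
            nlinarith [mul_nonneg (hw0 n) (hc0 n)]
          have h2 : 8 * (w n * s n * c n) ≤ (16 * r 0) * (w n * s n) := by
            have := hcR n
            nlinarith [mul_nonneg (hw0 n) (hs0 n)]
          have hGn : G n = (8/ε) * (w n * c n ^ 2) + (16 * r 0) * (w n * s n) := rfl
          rw [hsum_succ, hGn]
          linarith
    refine ⟨m, fun n hn => ?_⟩
    have h1 := claim n hn
    have h2 := htail m n hmN₀ hn
    linarith
  rw [Metric.tendsto_atTop]
  intro ε hε
  obtain ⟨N, hN⟩ := main (ε/7) (by linarith)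
  refine ⟨N, fun n hn => ?_⟩
  have h1 := hN n hn
  have h2 := hc0 n
  rw [Real.dist_eq, sub_zero, abs_of_nonneg h2]
  linarith
end

section
/- Let H be a real Hilbert space and let T : H → H be a nonexpansive mapping with Fix(T) ≠ ∅. Suppose the sequences (t_n), (s_n) in [0,1] satisfy ∑_{n=0}^∞ t_n (1 − t_n) = ∞ and limsup_{n→∞} s_n < 1. Let (x_n), (y_n) be the Ishikawa iteration starting from any x_0 ∈ H. Then liminf_{n→∞} ‖T(x_n) − x_n‖ = 0. -/
open Filter

theorem stmt_11 (H : Type*) [NormedAddCommGroup H] [InnerProductSpace ℝ H] [CompleteSpace H]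
    (T : H → H) (hT : ∀ x y : H, ‖T x - T y‖ ≤ ‖x - y‖)
    (hF : ∃ p : H, T p = p)
    (t s : ℕ → ℝ) (ht : ∀ n, t n ∈ Set.Icc (0:ℝ) 1) (hs : ∀ n, s n ∈ Set.Icc (0:ℝ) 1)
    (x y : ℕ → H)
    (hy : ∀ n, y n = (1 - s n) • x n + s n • T (x n))
    (hx : ∀ n, x (n + 1) = (1 - t n) • x n + t n • T (y n))
    (hdiv : Tendsto (fun N => ∑ n ∈ Finset.range N, t n * (1 - t n)) atTop atTop)
    (hls : limsup s atTop < 1) :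
    liminf (fun n => ‖T (x n) - x n‖) atTop = 0 := by
  obtain ⟨p, hp⟩ := hF
  -- Hilbert space parallelogram-type identity
  have hid : ∀ (a c : H) (r : ℝ), ‖(1-r)•a + r•c‖^2
      = (1-r)*‖a‖^2 + r*‖c‖^2 - r*(1-r)*‖a-c‖^2 := by
    intro a c r
    have h1 := norm_add_sq_real ((1-r)•a) (r•c)
    have h2 := norm_sub_sq_real a c
    rw [real_inner_smul_left, real_inner_smul_right, norm_smul, norm_smul] at h1
    simp only [Real.norm_eq_abs, mul_pow, sq_abs] at h1
    rw [h1]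
    nlinarith [h2]
  have hTxp : ∀ n, ‖T (x n) - p‖ ≤ ‖x n - p‖ := fun n => by
    calc ‖T (x n) - p‖ = ‖T (x n) - T p‖ := by rw [hp]
      _ ≤ ‖x n - p‖ := hT _ _
  have hyp : ∀ n, ‖y n - p‖ ≤ ‖x n - p‖ := by
    intro n
    have hrw : y n - p = (1 - s n) • (x n - p) + s n • (T (x n) - p) := by
      rw [hy n]; module
    rw [hrw]
    calc ‖(1 - s n) • (x n - p) + s n • (T (x n) - p)‖
        ≤ ‖(1 - s n) • (x n - p)‖ + ‖s n • (T (x n) - p)‖ := norm_add_le _ _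
      _ = (1 - s n) * ‖x n - p‖ + s n * ‖T (x n) - p‖ := by
          rw [norm_smul, norm_smul, Real.norm_eq_abs, Real.norm_eq_abs,
            abs_of_nonneg (by linarith [(hs n).2]), abs_of_nonneg (hs n).1]
      _ ≤ ‖x n - p‖ := by nlinarith [hTxp n, (hs n).1, (hs n).2, norm_nonneg (x n - p)]
  have hTyp : ∀ n, ‖T (y n) - p‖ ≤ ‖x n - p‖ := fun n => by
    calc ‖T (y n) - p‖ = ‖T (y n) - T p‖ := by rw [hp]
      _ ≤ ‖y n - p‖ := hT _ _
      _ ≤ ‖x n - p‖ := hyp n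
  have key : ∀ n, ‖x (n+1) - p‖^2
      ≤ ‖x n - p‖^2 - t n * (1 - t n) * ‖T (y n) - x n‖^2 := by
    intro n
    have hrw : x (n+1) - p = (1 - t n) • (x n - p) + t n • (T (y n) - p) := by
      rw [hx n]; module
    have hq := hid (x n - p) (T (y n) - p) (t n)
    have h3 : (x n - p) - (T (y n) - p) = x n - T (y n) := by abel
    rw [h3, norm_sub_rev (x n) (T (y n))] at hq
    rw [hrw, hq]
    have hh : t n * ‖T (y n) - p‖^2 ≤ t n * ‖x n - p‖^2 :=
      mul_le_mul_of_nonneg_left (pow_le_pow_left₀ (norm_nonneg _) (hTyp n) 2) (ht n).1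
    linarith
  have hdmono : ∀ n, ‖x (n+1) - p‖ ≤ ‖x n - p‖ := by
    intro n
    have h := key n
    have hw0 : 0 ≤ t n * (1 - t n) * ‖T (y n) - x n‖^2 :=
      mul_nonneg (mul_nonneg (ht n).1 (by linarith [(ht n).2])) (sq_nonneg _)
    nlinarith [norm_nonneg (x (n+1) - p), norm_nonneg (x n - p)]
  have hdbound : ∀ n, ‖x n - p‖ ≤ ‖x 0 - p‖ := by
    intro n
    induction n with
    | zero => exact le_refl _
    | succ k ih => exact (hdmono k).trans ih
  have hsum : ∀ N, (∑ n ∈ Finset.range N, t n * (1 - t n) * ‖T (y n) - x n‖^2)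
      + ‖x N - p‖^2 ≤ ‖x 0 - p‖^2 := by
    intro N
    induction N with
    | zero => simp
    | succ k ih =>
      rw [Finset.sum_range_succ]
      have := key k
      linarith
  have hfb : ∀ n, (1 - s n) * ‖T (x n) - x n‖ ≤ ‖T (y n) - x n‖ := by
    intro n
    have h1 : ‖T (x n) - x n‖ ≤ ‖T (x n) - T (y n)‖ + ‖T (y n) - x n‖ := by
      have hrw : T (x n) - x n = (T (x n) - T (y n)) + (T (y n) - x n) := by abel
      rw [hrw]; exact norm_add_le _ _
    have h2 : ‖T (x n) - T (y n)‖ ≤ ‖x n - y n‖ := hT _ _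
    have h3 : x n - y n = s n • (x n - T (x n)) := by rw [hy n]; module
    have h4 : ‖x n - y n‖ = s n * ‖T (x n) - x n‖ := by
      rw [h3, norm_smul, Real.norm_eq_abs, abs_of_nonneg (hs n).1, norm_sub_rev]
    linarith
  have hsb : IsBoundedUnder (· ≤ ·) atTop s := ⟨1, eventually_map.2 (Eventually.of_forall fun n => (hs n).2)⟩
  set c : ℝ := (limsup s atTop + 1)/2 with hc
  have hc1 : c < 1 := by rw [hc]; linarith
  have hevs : ∀ᶠ n in atTop, s n < c :=
    eventually_lt_of_limsup_lt (by rw [hc]; linarith) hsb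
  have hfreq : ∀ ε : ℝ, 0 < ε → ∃ᶠ n in atTop, ‖T (x n) - x n‖ ≤ ε := by
    intro ε hε
    by_contra hcon
    rw [not_frequently] at hcon
    have hδ : 0 < ((1-c)*ε)^2 := pow_pos (mul_pos (by linarith) hε) 2
    have hev : ∀ᶠ n in atTop,
        ((1-c)*ε)^2 * (t n * (1 - t n)) ≤ t n * (1 - t n) * ‖T (y n) - x n‖^2 := by
      filter_upwards [hcon, hevs] with n h1 h2
      push_neg at h1
      have hb1 : (1-c)*ε ≤ ‖T (y n) - x n‖ := by
        have hfbn := hfb n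
        nlinarith [(hs n).1, norm_nonneg (T (x n) - x n)]
      have hb0 : (0:ℝ) ≤ (1-c)*ε := le_of_lt (mul_pos (by linarith) hε)
      have hsq : ((1-c)*ε)^2 ≤ ‖T (y n) - x n‖^2 := pow_le_pow_left₀ hb0 hb1 2
      have hwn : 0 ≤ t n * (1 - t n) :=
        mul_nonneg (ht n).1 (by linarith [(ht n).2])
      calc ((1-c)*ε)^2 * (t n * (1 - t n)) = t n * (1 - t n) * ((1-c)*ε)^2 := by ring
        _ ≤ t n * (1 - t n) * ‖T (y n) - x n‖^2 := mul_le_mul_of_nonneg_left hsq hwn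
    obtain ⟨N₀, hN₀⟩ := eventually_atTop.1 hev
    set C : ℝ := ‖x 0 - p‖^2 with hC
    set δ : ℝ := ((1-c)*ε)^2 with hδdef
    set S : ℕ → ℝ := fun N => ∑ n ∈ Finset.range N, t n * (1 - t n) with hS
    obtain ⟨N, hSN, hNN₀⟩ :=
      ((tendsto_atTop.1 hdiv (S N₀ + (C+1)/δ)).and (eventually_ge_atTop N₀)).exists
    have h6 : ∑ n ∈ Finset.Ico N₀ N, t n * (1 - t n) * ‖T (y n) - x n‖^2 ≤ C := by
      have hsub : ∑ n ∈ Finset.Ico N₀ N, t n * (1 - t n) * ‖T (y n) - x n‖^2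
          ≤ ∑ n ∈ Finset.range N, t n * (1 - t n) * ‖T (y n) - x n‖^2 := by
        apply Finset.sum_le_sum_of_subset_of_nonneg
        · intro m hm
          rw [Finset.mem_range]
          exact (Finset.mem_Ico.1 hm).2
        · intro m _ _
          exact mul_nonneg (mul_nonneg (ht m).1 (by linarith [(ht m).2])) (sq_nonneg _)
      have := hsum N
      have := sq_nonneg ‖x N - p‖
      linarith
    have h7 : δ * ∑ n ∈ Finset.Ico N₀ N, t n * (1 - t n) ≤ C := by
      rw [Finset.mul_sum]
      refine le_trans (Finset.sum_le_sum ?_) h6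
      intro n hn
      exact hN₀ n (Finset.mem_Ico.1 hn).1
    have h8 : ∑ n ∈ Finset.Ico N₀ N, t n * (1 - t n) = S N - S N₀ :=
      Finset.sum_Ico_eq_sub _ hNN₀
    rw [h8] at h7
    have h9 : C + 1 ≤ δ * (S N - S N₀) := by
      calc C + 1 = δ * ((C+1)/δ) := by field_simp
        _ ≤ δ * (S N - S N₀) := mul_le_mul_of_nonneg_left (by linarith) hδ.le
    linarith
  have hbelow : IsBoundedUnder (· ≥ ·) atTop (fun n => ‖T (x n) - x n‖) :=
    ⟨0, eventually_map.2 (Eventually.of_forall fun n => norm_nonneg _)⟩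
  have habove : IsBoundedUnder (· ≤ ·) atTop (fun n => ‖T (x n) - x n‖) := by
    refine ⟨2 * ‖x 0 - p‖, eventually_map.2 (Eventually.of_forall fun n => ?_)⟩
    calc ‖T (x n) - x n‖ ≤ ‖T (x n) - p‖ + ‖p - x n‖ := by
          have hrw : T (x n) - x n = (T (x n) - p) + (p - x n) := by abel
          rw [hrw]; exact norm_add_le _ _
      _ ≤ ‖x n - p‖ + ‖x n - p‖ := by
          rw [norm_sub_rev p]; linarith [hTxp n]
      _ ≤ 2 * ‖x 0 - p‖ := by linarith [hdbound n]
  apply le_antisymm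
  · refine le_of_forall_pos_le_add fun ε hε => ?_
    have := liminf_le_of_frequently_le (hfreq ε hε) hbelow
    linarith
  · exact le_liminf_of_le habove.isCoboundedUnder_ge
      (Eventually.of_forall fun n => norm_nonneg _)
end

section
/- Let H be a real Hilbert space and let T : H → H be a nonexpansive mapping with Fix(T) ≠ ∅. Let (x_n), (y_n) be the Ishikawa iteration starting from any x_0 ∈ H, with t_n > 0 for all n. Then for all n ≥ 0, ‖T(x_{n+1}) − x_{n+1}‖ ≤ (1 + 2 s_n (1 − t_n)) ‖T(x_n) − x_n‖. -/
open Filter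

theorem stmt_12 (H : Type*) [NormedAddCommGroup H] [InnerProductSpace ℝ H] [CompleteSpace H]
    (T : H → H) (hT : ∀ x y : H, ‖T x - T y‖ ≤ ‖x - y‖)
    (hF : ∃ p : H, T p = p)
    (t s : ℕ → ℝ) (ht : ∀ n, t n ∈ Set.Icc (0:ℝ) 1) (hs : ∀ n, s n ∈ Set.Icc (0:ℝ) 1)
    (x y : ℕ → H)
    (hy : ∀ n, y n = (1 - s n) • x n + s n • T (x n))
    (hx : ∀ n, x (n + 1) = (1 - t n) • x n + t n • T (y n))
    (htpos : ∀ n, 0 < t n) :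
    ∀ n, ‖T (x (n + 1)) - x (n + 1)‖ ≤ (1 + 2 * s n * (1 - t n)) * ‖T (x n) - x n‖ := by
  intro n
  obtain ⟨hs0, hs1⟩ := hs n
  obtain ⟨ht0, ht1⟩ := ht n
  set d := ‖T (x n) - x n‖ with hd
  have hd0 : 0 ≤ d := norm_nonneg _
  have h1 : ‖x n - y n‖ = s n * d := by
    have : x n - y n = s n • (x n - T (x n)) := by rw [hy n]; module
    rw [this, norm_smul, Real.norm_eq_abs, abs_of_nonneg hs0, norm_sub_rev]
  have h2 : ‖T (x n) - y n‖ = (1 - s n) * d := by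
    have : T (x n) - y n = (1 - s n) • (T (x n) - x n) := by rw [hy n]; module
    rw [this, norm_smul, Real.norm_eq_abs, abs_of_nonneg (by linarith)]
  have h3 : ‖T (y n) - y n‖ ≤ d := by
    calc ‖T (y n) - y n‖ = ‖(T (y n) - T (x n)) + (T (x n) - y n)‖ := by
          rw [sub_add_sub_cancel]
      _ ≤ ‖T (y n) - T (x n)‖ + ‖T (x n) - y n‖ := norm_add_le _ _
      _ ≤ ‖y n - x n‖ + (1 - s n) * d := by rw [h2]; exact add_le_add_left (hT _ _) _
      _ = s n * d + (1 - s n) * d := by rw [norm_sub_rev, h1]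
      _ = d := by ring
  have h4 : ‖T (y n) - x n‖ ≤ (1 + s n) * d := by
    calc ‖T (y n) - x n‖ = ‖(T (y n) - T (x n)) + (T (x n) - x n)‖ := by
          rw [sub_add_sub_cancel]
      _ ≤ ‖T (y n) - T (x n)‖ + d := norm_add_le _ _
      _ ≤ ‖y n - x n‖ + d := add_le_add_left (hT _ _) _
      _ = s n * d + d := by rw [norm_sub_rev, h1]
      _ = (1 + s n) * d := by ring
  have h5 : ‖x (n + 1) - y n‖ ≤ (1 - t n) * (s n * d) + t n * d := by
    have : x (n + 1) - y n = (1 - t n) • (x n - y n) + t n • (T (y n) - y n) := by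
      rw [hx n]; module
    calc ‖x (n + 1) - y n‖ ≤ ‖(1 - t n) • (x n - y n)‖ + ‖t n • (T (y n) - y n)‖ := by
          rw [this]; exact norm_add_le _ _
      _ = (1 - t n) * ‖x n - y n‖ + t n * ‖T (y n) - y n‖ := by
          rw [norm_smul, norm_smul, Real.norm_eq_abs, Real.norm_eq_abs,
            abs_of_nonneg (by linarith : (0:ℝ) ≤ 1 - t n), abs_of_nonneg ht0]
      _ ≤ (1 - t n) * (s n * d) + t n * d := by
          rw [h1]
          have := mul_le_mul_of_nonneg_left h3 ht0
          linarith
  have h6 : ‖T (y n) - x (n + 1)‖ ≤ (1 - t n) * ((1 + s n) * d) := by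
    have heq : T (y n) - x (n + 1) = (1 - t n) • (T (y n) - x n) := by rw [hx n]; module
    rw [heq, norm_smul, Real.norm_eq_abs, abs_of_nonneg (by linarith : (0:ℝ) ≤ 1 - t n)]
    exact mul_le_mul_of_nonneg_left h4 (by linarith)
  calc ‖T (x (n + 1)) - x (n + 1)‖
      = ‖(T (x (n + 1)) - T (y n)) + (T (y n) - x (n + 1))‖ := by rw [sub_add_sub_cancel]
    _ ≤ ‖T (x (n + 1)) - T (y n)‖ + ‖T (y n) - x (n + 1)‖ := norm_add_le _ _
    _ ≤ ‖x (n + 1) - y n‖ + ‖T (y n) - x (n + 1)‖ := add_le_add_left (hT _ _) _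
    _ ≤ ((1 - t n) * (s n * d) + t n * d) + (1 - t n) * ((1 + s n) * d) := add_le_add h5 h6
    _ = (1 + 2 * s n * (1 - t n)) * d := by ring
end

section
/- Let H be a real Hilbert space and let T : H → H be a nonexpansive mapping with Fix(T) ≠ ∅. Suppose the sequences (t_n), (s_n) in [0,1] satisfy ∑_{n=0}^∞ t_n (1 − t_n) = ∞, ∑_{n=0}^∞ (1 − t_n) s_n < ∞ and limsup_{n→∞} s_n < 1. Let (x_n), (y_n) be the Ishikawa iteration starting from any x_0 ∈ H. Then lim_{n→∞} ‖T(x_n) − x_n‖ = 0. -/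
open Filter

lemma norm_combo {H : Type*} [NormedAddCommGroup H] [InnerProductSpace ℝ H] (a b : H) (t : ℝ) :
    ‖(1-t) • a + t • b‖^2 = (1-t)*‖a‖^2 + t*‖b‖^2 - t*(1-t)*‖a-b‖^2 := by
  rw [← real_inner_self_eq_norm_sq, ← real_inner_self_eq_norm_sq a,
    ← real_inner_self_eq_norm_sq b, ← real_inner_self_eq_norm_sq (a-b)]
  simp only [inner_add_left, inner_add_right, inner_sub_left, inner_sub_right,
    real_inner_smul_left, real_inner_smul_right, real_inner_comm b a]
  ring

theorem stmt_13 (H : Type*) [NormedAddCommGroup H] [InnerProductSpace ℝ H] [CompleteSpace H]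
    (T : H → H) (hT : ∀ x y : H, ‖T x - T y‖ ≤ ‖x - y‖)
    (hF : ∃ p : H, T p = p)
    (t s : ℕ → ℝ) (ht : ∀ n, t n ∈ Set.Icc (0:ℝ) 1) (hs : ∀ n, s n ∈ Set.Icc (0:ℝ) 1)
    (x y : ℕ → H)
    (hy : ∀ n, y n = (1 - s n) • x n + s n • T (x n))
    (hx : ∀ n, x (n + 1) = (1 - t n) • x n + t n • T (y n))
    (hdiv : Tendsto (fun N => ∑ n ∈ Finset.range N, t n * (1 - t n)) atTop atTop)
    (hconv : Summable (fun n => (1 - t n) * s n))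
    (hls : limsup s atTop < 1) :
    Tendsto (fun n => ‖T (x n) - x n‖) atTop (nhds 0) := by
  obtain ⟨p, hp⟩ := hF
  set c : ℕ → ℝ := fun n => ‖T (x n) - x n‖ with hc
  set d : ℕ → ℝ := fun n => ‖T (y n) - x n‖ with hd
  have hc0 : ∀ n, 0 ≤ c n := fun n => norm_nonneg _
  have hd0 : ∀ n, 0 ≤ d n := fun n => norm_nonneg _
  -- basic inequalities
  have hdc : ∀ n, d n ≤ (1 + s n) * c n := by
    intro n
    have e3 : y n - x n = s n • (T (x n) - x n) := by rw [hy n]; module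
    calc d n = ‖(T (y n) - T (x n)) + (T (x n) - x n)‖ := by rw [sub_add_sub_cancel]
      _ ≤ ‖T (y n) - T (x n)‖ + c n := norm_add_le _ _
      _ ≤ ‖y n - x n‖ + c n := by linarith [hT (y n) (x n)]
      _ = s n * c n + c n := by rw [e3, norm_smul, Real.norm_eq_abs, abs_of_nonneg (hs n).1]
      _ = (1 + s n) * c n := by ring
  have hcd : ∀ n, (1 - s n) * c n ≤ d n := by
    intro n
    have e3 : y n - x n = s n • (T (x n) - x n) := by rw [hy n]; module
    have h1 : c n ≤ ‖T (x n) - T (y n)‖ + d n := by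
      calc c n = ‖(T (x n) - T (y n)) + (T (y n) - x n)‖ := by rw [sub_add_sub_cancel]
        _ ≤ _ := norm_add_le _ _
    have h2 : ‖T (x n) - T (y n)‖ ≤ s n * c n := by
      calc ‖T (x n) - T (y n)‖ ≤ ‖x n - y n‖ := hT _ _
        _ = ‖y n - x n‖ := norm_sub_rev _ _
        _ = s n * c n := by rw [e3, norm_smul, Real.norm_eq_abs, abs_of_nonneg (hs n).1]
    nlinarith
  -- energy estimate
  have hA : ∀ n, ‖x (n+1) - p‖^2 ≤ ‖x n - p‖^2 - t n * (1 - t n) * d n ^ 2 := by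
    intro n
    obtain ⟨ht0, ht1⟩ := ht n
    obtain ⟨hs0, hs1⟩ := hs n
    have ey : y n - p = (1 - s n) • (x n - p) + s n • (T (x n) - p) := by rw [hy n]; module
    have hyp2 : ‖y n - p‖^2 ≤ ‖x n - p‖^2 := by
      rw [ey, norm_combo]
      have h1 : ‖T (x n) - p‖ ≤ ‖x n - p‖ := by
        have := hT (x n) p; rw [hp] at this; exact this
      have h1' : ‖T (x n) - p‖^2 ≤ ‖x n - p‖^2 :=
        pow_le_pow_left₀ (norm_nonneg _) h1 2
      have h2 := mul_le_mul_of_nonneg_left h1' hs0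
      have h3 : 0 ≤ s n * (1 - s n) * ‖(x n - p) - (T (x n) - p)‖^2 :=
        mul_nonneg (mul_nonneg hs0 (by linarith)) (sq_nonneg _)
      linarith
    have ex : x (n+1) - p = (1 - t n) • (x n - p) + t n • (T (y n) - p) := by rw [hx n]; module
    have hTy : ‖T (y n) - p‖^2 ≤ ‖x n - p‖^2 := by
      have h1 : ‖T (y n) - p‖ ≤ ‖y n - p‖ := by
        have := hT (y n) p; rw [hp] at this; exact this
      have := pow_le_pow_left₀ (norm_nonneg (T (y n) - p)) h1 2
      linarith
    have hdiff : ‖(x n - p) - (T (y n) - p)‖ = d n := by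
      rw [show (x n - p) - (T (y n) - p) = -(T (y n) - x n) by abel, norm_neg]
    rw [ex, norm_combo, hdiff]
    have h2 := mul_le_mul_of_nonneg_left hTy ht0
    linarith
  -- summability of t(1-t)d²
  have hterm0 : ∀ n, 0 ≤ t n * (1 - t n) * d n ^ 2 := fun n =>
    mul_nonneg (mul_nonneg (ht n).1 (by linarith [(ht n).2])) (sq_nonneg _)
  have hbound : ∀ N, ∑ n ∈ Finset.range N, t n * (1 - t n) * d n ^ 2 + ‖x N - p‖^2
      ≤ ‖x 0 - p‖^2 := by
    intro N
    induction N with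
    | zero => simp
    | succ M ihM =>
      rw [Finset.sum_range_succ]
      have := hA M
      linarith
  have hsum : Summable (fun n => t n * (1 - t n) * d n ^ 2) := by
    apply summable_of_sum_range_le (c := ‖x 0 - p‖^2) hterm0
    intro N
    have := hbound N
    nlinarith [sq_nonneg ‖x N - p‖]
  -- quasi-monotonicity of c
  have hmono : ∀ n, c (n+1) ≤ (1 + 2 * ((1 - t n) * s n)) * c n := by
    intro n
    obtain ⟨ht0, ht1⟩ := ht n
    obtain ⟨hs0, hs1⟩ := hs n
    have e1 : T (y n) - x (n+1) = (1 - t n) • (T (y n) - x n) := by rw [hx n]; module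
    have e2 : x (n+1) - y n = t n • (T (y n) - T (x n)) + (t n - s n) • (T (x n) - x n) := by
      rw [hx n, hy n]; module
    have e3 : y n - x n = s n • (T (x n) - x n) := by rw [hy n]; module
    have h1 : c (n+1) ≤ ‖x (n+1) - y n‖ + (1 - t n) * d n := by
      calc c (n+1) = ‖(T (x (n+1)) - T (y n)) + (T (y n) - x (n+1))‖ := by
            rw [sub_add_sub_cancel]
        _ ≤ ‖T (x (n+1)) - T (y n)‖ + ‖T (y n) - x (n+1)‖ := norm_add_le _ _
        _ ≤ ‖x (n+1) - y n‖ + (1 - t n) * d n := by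
            have := hT (x (n+1)) (y n)
            rw [e1, norm_smul, Real.norm_eq_abs, abs_of_nonneg (by linarith)]
            linarith
    have h2 : ‖x (n+1) - y n‖ ≤ t n * (s n * c n) + |t n - s n| * c n := by
      calc ‖x (n+1) - y n‖ ≤ ‖t n • (T (y n) - T (x n))‖ + ‖(t n - s n) • (T (x n) - x n)‖ := by
            rw [e2]; exact norm_add_le _ _
        _ = t n * ‖T (y n) - T (x n)‖ + |t n - s n| * c n := by
            rw [norm_smul, norm_smul, Real.norm_eq_abs, Real.norm_eq_abs, abs_of_nonneg ht0]
        _ ≤ t n * (s n * c n) + |t n - s n| * c n := by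
            have h3 : ‖T (y n) - T (x n)‖ ≤ s n * c n := by
              calc ‖T (y n) - T (x n)‖ ≤ ‖y n - x n‖ := hT _ _
                _ = s n * c n := by rw [e3, norm_smul, Real.norm_eq_abs, abs_of_nonneg hs0]
            nlinarith
    have h4 := mul_le_mul_of_nonneg_left (hdc n) (show (0:ℝ) ≤ 1 - t n by linarith)
    have hc0n := hc0 n
    have h5 : 0 ≤ (1 - t n) * s n * c n :=
      mul_nonneg (mul_nonneg (by linarith) hs0) hc0n
    have h6 : 0 ≤ t n * (1 - s n) * c n :=
      mul_nonneg (mul_nonneg ht0 (by linarith)) hc0n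
    rcases abs_cases (t n - s n) with ⟨habs, _⟩ | ⟨habs, _⟩ <;> rw [habs] at h2 <;> nlinarith
  -- the product sequence
  set u : ℕ → ℝ := fun n => (1 - t n) * s n with hu
  have hu0 : ∀ n, 0 ≤ u n := fun n => mul_nonneg (by linarith [(ht n).2]) (hs n).1
  set P : ℕ → ℝ := fun n => ∏ k ∈ Finset.range n, (1 + 2 * u k) with hP
  have hP1 : ∀ n, 1 ≤ P n := by
    intro n
    show (1:ℝ) ≤ ∏ k ∈ Finset.range n, (1 + 2 * u k)
    calc (1:ℝ) = ∏ k ∈ Finset.range n, 1 := by simp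
      _ ≤ ∏ k ∈ Finset.range n, (1 + 2 * u k) :=
        Finset.prod_le_prod (fun k _ => by norm_num) (fun k _ => by linarith [hu0 k])
  have hPpos : ∀ n, 0 < P n := fun n => lt_of_lt_of_le one_pos (hP1 n)
  have hPsucc : ∀ n, P (n+1) = (1 + 2 * u n) * P n := by
    intro n
    show (∏ k ∈ Finset.range (n+1), (1 + 2 * u k)) = _
    rw [Finset.prod_range_succ, mul_comm]
  have hPmono : Monotone P := by
    apply monotone_nat_of_le_succ
    intro n
    rw [hPsucc n]
    nlinarith [hPpos n, hu0 n]
  have hPbdd : ∀ n, P n ≤ Real.exp (2 * ∑' k, u k) := by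
    intro n
    show (∏ k ∈ Finset.range n, (1 + 2 * u k)) ≤ _
    calc (∏ k ∈ Finset.range n, (1 + 2 * u k)) ≤ ∏ k ∈ Finset.range n, Real.exp (2 * u k) := by
          apply Finset.prod_le_prod
          · intro k _; linarith [hu0 k]
          · intro k _; linarith [Real.add_one_le_exp (2 * u k)]
      _ = Real.exp (∑ k ∈ Finset.range n, 2 * u k) := by rw [Real.exp_sum]
      _ ≤ Real.exp (2 * ∑' k, u k) := by
          apply Real.exp_le_exp.2
          rw [← Finset.mul_sum]
          have := Summable.sum_le_tsum (Finset.range n) (fun k _ => hu0 k) hconv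
          linarith
  set g : ℕ → ℝ := fun n => c n / P n with hg
  have hganti : Antitone g := by
    apply antitone_nat_of_succ_le
    intro n
    have hfac : (0:ℝ) < 1 + 2 * u n := by linarith [hu0 n]
    show c (n+1) / P (n+1) ≤ c n / P n
    rw [hPsucc n]
    calc c (n+1) / ((1 + 2 * u n) * P n) ≤ ((1 + 2 * u n) * c n) / ((1 + 2 * u n) * P n) := by
          gcongr
          · exact le_of_lt (mul_pos hfac (hPpos n))
          · exact hmono n
      _ = c n / P n := mul_div_mul_left _ _ (ne_of_gt hfac)
  -- limits
  have hQtend : Tendsto P atTop (nhds (⨆ n, P n)) := by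
    apply tendsto_atTop_ciSup hPmono
    exact ⟨Real.exp (2 * ∑' k, u k), by rintro z ⟨n, rfl⟩; exact hPbdd n⟩
  have hLtend : Tendsto g atTop (nhds (⨅ n, g n)) := by
    apply tendsto_atTop_ciInf hganti
    exact ⟨0, by rintro z ⟨n, rfl⟩; exact div_nonneg (hc0 n) (hPpos n).le⟩
  set Q := ⨆ n, P n with hQdef
  set L := ⨅ n, g n with hLdef
  have hctend : Tendsto c atTop (nhds (L * Q)) := by
    have h := hLtend.mul hQtend
    have heq : (fun n => g n * P n) = c := by
      funext n
      exact div_mul_cancel₀ (c n) (ne_of_gt (hPpos n))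
    rwa [heq] at h
  have hL0 : 0 ≤ L := le_ciInf fun n => div_nonneg (hc0 n) (hPpos n).le
  have hQ1 : 1 ≤ Q := by
    have : P 0 ≤ Q := le_ciSup ⟨Real.exp (2 * ∑' k, u k), by rintro z ⟨n, rfl⟩; exact hPbdd n⟩ 0
    linarith [hP1 0]
  -- L * Q = 0
  have hLQ : L * Q = 0 := by
    by_contra hne
    have hpos : 0 < L * Q := lt_of_le_of_ne (mul_nonneg hL0 (by linarith)) (Ne.symm hne)
    have hev1 : ∀ᶠ n in atTop, L * Q / 2 < c n :=
      hctend.eventually (eventually_gt_nhds (half_lt_self hpos))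
    have hbdd : IsBoundedUnder (· ≤ ·) atTop s := isBoundedUnder_of ⟨1, fun n => (hs n).2⟩
    set b : ℝ := (limsup s atTop + 1) / 2 with hbdef
    have hb1 : b < 1 := by rw [hbdef]; linarith
    have hlsb : limsup s atTop < b := by rw [hbdef]; linarith
    have hev2 : ∀ᶠ n in atTop, s n < b := eventually_lt_of_limsup_lt hlsb hbdd
    obtain ⟨N, hN⟩ := eventually_atTop.1 (hev1.and hev2)
    set δ : ℝ := (1 - b) * (L * Q / 2) with hδdef
    have hδpos : 0 < δ := mul_pos (by linarith) (by linarith)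
    have hdδ : ∀ n, δ ≤ d (n + N) := by
      intro n
      obtain ⟨h1, h2⟩ := hN (n + N) (Nat.le_add_left N n)
      have := hcd (n + N)
      have hs1' := (hs (n + N)).1
      nlinarith
    have hsum3 : Summable (fun n => t (n+N) * (1 - t (n+N))) := by
      have hsum2 : Summable (fun n => t (n+N) * (1 - t (n+N)) * d (n+N) ^ 2 / δ^2) :=
        ((summable_nat_add_iff N).2 hsum).div_const _
      apply Summable.of_nonneg_of_le
        (fun n => mul_nonneg (ht (n+N)).1 (by linarith [(ht (n+N)).2])) _ hsum2
      intro n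
      rw [le_div_iff₀ (by positivity)]
      have h1 : δ^2 ≤ d (n+N)^2 := pow_le_pow_left₀ hδpos.le (hdδ n) 2
      have h2 : 0 ≤ t (n+N) * (1 - t (n+N)) :=
        mul_nonneg (ht (n+N)).1 (by linarith [(ht (n+N)).2])
      nlinarith
    have hsum4 : Summable (fun n => t n * (1 - t n)) := (summable_nat_add_iff N).1 hsum3
    exact not_tendsto_atTop_of_tendsto_nhds hsum4.hasSum.tendsto_sum_nat hdiv
  rw [hLQ] at hctend
  exact hctend
end

section
/- Let H be a real Hilbert space and let T : H → H be a nonexpansive mapping with Fix(T) ≠ ∅. Suppose the sequences (t_n), (s_n) in [0,1] satisfy ∑_{n=0}^∞ t_n (1 − t_n) = ∞ and ∑_{n=0}^∞ t_n (1 − t_n) s_n < ∞. Then for every x_0 ∈ H, the Ishikawa iteration (x_n) converges weakly to a point of Fix(T). -/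
set_option maxHeartbeats 1000000


open Filter
open scoped RealInnerProductSpace

private lemma combo_norm_sq {H : Type*} [NormedAddCommGroup H] [InnerProductSpace ℝ H]
    (t : ℝ) (u v : H) :
    ‖(1 - t) • u + t • v‖ ^ 2
      = (1 - t) * ‖u‖ ^ 2 + t * ‖v‖ ^ 2 - t * (1 - t) * ‖u - v‖ ^ 2 := by
  have h1 := norm_add_sq_real ((1 - t) • u) (t • v)
  have h2 := norm_sub_sq_real u v
  rw [real_inner_smul_left, real_inner_smul_right, norm_smul, norm_smul, mul_pow, mul_pow,
    Real.norm_eq_abs, Real.norm_eq_abs, sq_abs, sq_abs] at h1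
  rw [h1, h2]
  ring

private lemma exists_tendsto_of_le_add {c ε : ℕ → ℝ} (hc : ∀ n, 0 ≤ c n)
    (hstep : ∀ n, c (n + 1) ≤ c n + ε n) (hε0 : ∀ n, 0 ≤ ε n) (hε : Summable ε) :
    ∃ L, Tendsto c atTop (nhds L) := by
  have htails : ∀ n, Summable (fun k => ε (k + n)) := fun n => (summable_nat_add_iff n).2 hε
  have htail_rec : ∀ n, ∑' k, ε (k + n) = ε n + ∑' k, ε (k + (n + 1)) := by
    intro n
    rw [Summable.tsum_eq_zero_add (htails n)]
    congr 1
    · simp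
    · exact tsum_congr fun k => by congr 1; omega
  have htail0 : ∀ n, 0 ≤ ∑' k, ε (k + n) := fun n => tsum_nonneg fun k => hε0 _
  set g : ℕ → ℝ := fun n => c n + ∑' k, ε (k + n) with hg
  have hganti : Antitone g := by
    refine antitone_nat_of_succ_le fun n => ?_
    have h1 := hstep n
    have h2 := htail_rec n
    simp only [hg]
    linarith
  have hgbdd : BddBelow (Set.range g) := by
    refine ⟨0, ?_⟩
    rintro _ ⟨n, rfl⟩
    have := hc n
    have := htail0 n
    simp only [hg]
    linarith
  have hgt : Tendsto g atTop (nhds (⨅ n, g n)) := tendsto_atTop_ciInf hganti hgbdd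
  have htail : Tendsto (fun n => ∑' k, ε (k + n)) atTop (nhds 0) := tendsto_sum_nat_add ε
  refine ⟨(⨅ n, g n) - 0, ?_⟩
  have := hgt.sub htail
  simpa only [hg, add_sub_cancel_right] using this

theorem stmt_15 (H : Type*) [NormedAddCommGroup H] [InnerProductSpace ℝ H] [CompleteSpace H]
    (T : H → H) (hT : ∀ x y : H, ‖T x - T y‖ ≤ ‖x - y‖)
    (hF : ∃ p : H, T p = p)
    (t s : ℕ → ℝ) (ht : ∀ n, t n ∈ Set.Icc (0:ℝ) 1) (hs : ∀ n, s n ∈ Set.Icc (0:ℝ) 1)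
    (hdiv : Tendsto (fun N => ∑ n ∈ Finset.range N, t n * (1 - t n)) atTop atTop)
    (hconv : Summable (fun n => t n * (1 - t n) * s n))
    (x y : ℕ → H)
    (hy : ∀ n, y n = (1 - s n) • x n + s n • T (x n))
    (hx : ∀ n, x (n + 1) = (1 - t n) • x n + t n • T (y n)) :
    ∃ q : H, T q = q ∧ ∀ v : H, Tendsto (fun n => ⟪x n, v⟫) atTop (nhds ⟪q, v⟫) := by
  obtain ⟨p, hp⟩ := hF
  have ht0 : ∀ n, (0:ℝ) ≤ t n := fun n => (ht n).1
  have ht1 : ∀ n, t n ≤ 1 := fun n => (ht n).2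
  have hs0 : ∀ n, (0:ℝ) ≤ s n := fun n => (hs n).1
  have hs1 : ∀ n, s n ≤ 1 := fun n => (hs n).2
  have tri : ∀ a b c : H, ‖a - c‖ ≤ ‖a - b‖ + ‖b - c‖ := fun a b c => by
    simpa [sub_add_sub_cancel] using norm_add_le (a - b) (b - c)
  have hTfix : ∀ p' : H, T p' = p' → ∀ z : H, ‖T z - p'‖ ≤ ‖z - p'‖ := by
    intro p' hp' z
    have := hT z p'
    rwa [hp'] at this
  set c : ℕ → ℝ := fun n => ‖x n - T (x n)‖ with hc
  set d : ℕ → ℝ := fun n => ‖x n - T (y n)‖ with hd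
  have hc0 : ∀ n, 0 ≤ c n := fun n => norm_nonneg _
  have hd0 : ∀ n, 0 ≤ d n := fun n => norm_nonneg _
  -- basic algebraic identities
  have e1 : ∀ n, x n - y n = s n • (x n - T (x n)) := fun n => by rw [hy n]; module
  have e2 : ∀ n, y n - T (x n) = (1 - s n) • (x n - T (x n)) := fun n => by rw [hy n]; module
  have e3 : ∀ n, x (n+1) - T (y n) = (1 - t n) • (x n - T (y n)) := fun n => by rw [hx n]; module
  have e4 : ∀ n, x n - x (n+1) = t n • (x n - T (y n)) := fun n => by rw [hx n]; module
  have e5 : ∀ n, y n - x (n+1) = (1 - t n) • (y n - x n) + t n • (y n - T (y n)) := fun n => by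
    rw [hx n]; module
  have e6 : ∀ (p' : H) n, x (n+1) - p' = (1 - t n) • (x n - p') + t n • (T (y n) - p') :=
    fun p' n => by rw [hx n]; module
  have e7 : ∀ (p' : H) n, y n - p' = (1 - s n) • (x n - p') + s n • (T (x n) - p') :=
    fun p' n => by rw [hy n]; module
  have n1 : ∀ n, ‖x n - y n‖ = s n * c n := fun n => by
    rw [e1 n, norm_smul, Real.norm_eq_abs, abs_of_nonneg (hs0 n)]
  have n2 : ∀ n, ‖y n - T (x n)‖ = (1 - s n) * c n := fun n => by
    rw [e2 n, norm_smul, Real.norm_eq_abs, abs_of_nonneg (by linarith [hs1 n])]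
  have n4 : ∀ n, ‖x n - x (n+1)‖ = t n * d n := fun n => by
    rw [e4 n, norm_smul, Real.norm_eq_abs, abs_of_nonneg (ht0 n)]
  -- Fejér monotonicity for any fixed point
  have hylep : ∀ p' : H, T p' = p' → ∀ n, ‖y n - p'‖ ≤ ‖x n - p'‖ := by
    intro p' hp' n
    rw [e7 p' n]
    calc ‖(1 - s n) • (x n - p') + s n • (T (x n) - p')‖
        ≤ ‖(1 - s n) • (x n - p')‖ + ‖s n • (T (x n) - p')‖ := norm_add_le _ _
      _ = (1 - s n) * ‖x n - p'‖ + s n * ‖T (x n) - p'‖ := by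
          rw [norm_smul, norm_smul, Real.norm_eq_abs, Real.norm_eq_abs,
            abs_of_nonneg (by linarith [hs1 n]), abs_of_nonneg (hs0 n)]
      _ ≤ (1 - s n) * ‖x n - p'‖ + s n * ‖x n - p'‖ := by
          have := hTfix p' hp' (x n)
          nlinarith [hs0 n]
      _ = ‖x n - p'‖ := by ring
  have hTylep : ∀ p' : H, T p' = p' → ∀ n, ‖T (y n) - p'‖ ≤ ‖x n - p'‖ := fun p' hp' n =>
    le_trans (hTfix p' hp' (y n)) (hylep p' hp' n)
  have hfej : ∀ p' : H, T p' = p' → ∀ n, ‖x (n+1) - p'‖ ≤ ‖x n - p'‖ := by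
    intro p' hp' n
    rw [e6 p' n]
    calc ‖(1 - t n) • (x n - p') + t n • (T (y n) - p')‖
        ≤ ‖(1 - t n) • (x n - p')‖ + ‖t n • (T (y n) - p')‖ := norm_add_le _ _
      _ = (1 - t n) * ‖x n - p'‖ + t n * ‖T (y n) - p'‖ := by
          rw [norm_smul, norm_smul, Real.norm_eq_abs, Real.norm_eq_abs,
            abs_of_nonneg (by linarith [ht1 n]), abs_of_nonneg (ht0 n)]
      _ ≤ (1 - t n) * ‖x n - p'‖ + t n * ‖x n - p'‖ := by
          have := hTylep p' hp' n
          nlinarith [ht0 n]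
      _ = ‖x n - p'‖ := by ring
  have hAlim : ∀ p' : H, T p' = p' →
      ∃ A : ℝ, 0 ≤ A ∧ Tendsto (fun n => ‖x n - p'‖) atTop (nhds A) := by
    intro p' hp'
    have hanti : Antitone (fun n => ‖x n - p'‖) := antitone_nat_of_succ_le (hfej p' hp')
    have hbdd : BddBelow (Set.range fun n => ‖x n - p'‖) := by
      refine ⟨0, ?_⟩; rintro _ ⟨n, rfl⟩; exact norm_nonneg _
    have htend := tendsto_atTop_ciInf hanti hbdd
    exact ⟨_, ge_of_tendsto' htend fun n => norm_nonneg _, htend⟩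
  have hantiP : Antitone (fun n => ‖x n - p‖) := antitone_nat_of_succ_le (hfej p hp)
  have haP : ∀ n, ‖x n - p‖ ≤ ‖x 0 - p‖ := fun n => hantiP (Nat.zero_le n)
  have hca : ∀ n, c n ≤ 2 * ‖x 0 - p‖ := by
    intro n
    have h1 : c n ≤ ‖x n - p‖ + ‖p - T (x n)‖ := tri _ _ _
    have h2 : ‖p - T (x n)‖ = ‖T (x n) - p‖ := norm_sub_rev _ _
    have h3 := hTfix p hp (x n)
    have := haP n
    linarith
  -- squared Fejér inequality at p
  have key : ∀ n, ‖x (n+1) - p‖^2 ≤ ‖x n - p‖^2 - t n * (1 - t n) * d n ^ 2 := by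
    intro n
    have hcombo := combo_norm_sq (t n) (x n - p) (T (y n) - p)
    rw [sub_sub_sub_cancel_right] at hcombo
    rw [e6 p n, hcombo]
    have h1 : ‖T (y n) - p‖ ^ 2 ≤ ‖x n - p‖ ^ 2 :=
      pow_le_pow_left₀ (norm_nonneg _) (hTylep p hp n) 2
    nlinarith [ht0 n]
  -- summability of t(1-t)d^2
  have summable1 : Summable (fun n => t n * (1 - t n) * d n ^ 2) := by
    have hnn : ∀ n, 0 ≤ t n * (1 - t n) * d n ^ 2 := fun n =>
      mul_nonneg (mul_nonneg (ht0 n) (by linarith [ht1 n])) (sq_nonneg _)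
    refine summable_of_sum_range_le hnn (c := ‖x 0 - p‖^2) ?_
    intro N
    have hind : ∀ N, ∑ n ∈ Finset.range N, t n * (1 - t n) * d n ^ 2
        ≤ ‖x 0 - p‖^2 - ‖x N - p‖^2 := by
      intro N
      induction N with
      | zero => simp
      | succ N ih =>
          rw [Finset.sum_range_succ]
          have := key N
          linarith
    have := hind N
    nlinarith [norm_nonneg (x N - p)]
  -- lower bound on d
  have hd_ge : ∀ n, (1 - s n) * c n ≤ d n := by
    intro n
    have h1 : c n ≤ d n + ‖T (y n) - T (x n)‖ := tri _ _ _
    have h2 : ‖T (y n) - T (x n)‖ ≤ ‖y n - x n‖ := hT _ _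
    have h3 : ‖y n - x n‖ = s n * c n := by rw [norm_sub_rev]; exact n1 n
    nlinarith
  -- summability of t(1-t)c^2
  have summable2 : Summable (fun n => t n * (1 - t n) * c n ^ 2) := by
    have hle : ∀ n, t n * (1 - t n) * c n ^ 2
        ≤ t n * (1 - t n) * d n ^ 2 + (t n * (1 - t n) * s n) * (8 * ‖x 0 - p‖^2) := by
      intro n
      have h1 := hd_ge n
      have h2 : (1 - s n) * c n ≥ 0 := mul_nonneg (by linarith [hs1 n]) (hc0 n)
      have h3 : ((1 - s n) * c n)^2 ≤ d n ^ 2 := pow_le_pow_left₀ h2 h1 2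
      have h4 := hca n
      have h5 : 0 ≤ t n * (1 - t n) := mul_nonneg (ht0 n) (by linarith [ht1 n])
      have h6 : c n ^ 2 ≤ 4 * ‖x 0 - p‖ ^ 2 := by nlinarith [hc0 n]
      have hc2 : c n ^ 2 ≤ d n ^ 2 + 2 * s n * (4 * ‖x 0 - p‖ ^ 2) := by
        nlinarith [mul_le_mul_of_nonneg_left h6 (hs0 n),
          mul_nonneg (mul_nonneg (hs0 n) (hs0 n)) (sq_nonneg (c n))]
      nlinarith [mul_le_mul_of_nonneg_left hc2 h5]
    have hnn : ∀ n, 0 ≤ t n * (1 - t n) * c n ^ 2 := fun n =>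
      mul_nonneg (mul_nonneg (ht0 n) (by linarith [ht1 n])) (sq_nonneg _)
    exact Summable.of_nonneg_of_le hnn hle
      (summable1.add (hconv.mul_right (8 * ‖x 0 - p‖^2)))
  -- step inequality for c
  have hstep : ∀ n, c (n+1) ≤ c n + 2 * (t n * (1 - t n) * s n) * c n := by
    intro n
    have i1 : ‖y n - T (y n)‖ ≤ c n := by
      have h1 : ‖y n - T (y n)‖ ≤ ‖y n - T (x n)‖ + ‖T (x n) - T (y n)‖ := tri _ _ _
      have h2 : ‖T (x n) - T (y n)‖ ≤ ‖x n - y n‖ := hT _ _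
      rw [n2 n] at h1
      rw [n1 n] at h2
      linarith
    have i2 : d n ≤ (1 + s n) * c n := by
      have h1 : d n ≤ c n + ‖T (x n) - T (y n)‖ := tri _ _ _
      have h2 : ‖T (x n) - T (y n)‖ ≤ ‖x n - y n‖ := hT _ _
      rw [n1 n] at h2
      linarith
    have i4 : ‖y n - x (n+1)‖ ≤ (1 - t n) * (s n * c n) + t n * c n := by
      rw [e5 n]
      calc ‖(1 - t n) • (y n - x n) + t n • (y n - T (y n))‖
          ≤ ‖(1 - t n) • (y n - x n)‖ + ‖t n • (y n - T (y n))‖ := norm_add_le _ _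
        _ = (1 - t n) * ‖y n - x n‖ + t n * ‖y n - T (y n)‖ := by
            rw [norm_smul, norm_smul, Real.norm_eq_abs, Real.norm_eq_abs,
              abs_of_nonneg (by linarith [ht1 n]), abs_of_nonneg (ht0 n)]
        _ ≤ (1 - t n) * (s n * c n) + t n * c n := by
            have h3 : ‖y n - x n‖ = s n * c n := by rw [norm_sub_rev]; exact n1 n
            rw [h3]
            have := mul_le_mul_of_nonneg_left i1 (ht0 n)
            linarith
    have i5 : ‖x n - T (x (n+1))‖ ≤ c n + t n * d n := by
      have h1 : ‖x n - T (x (n+1))‖ ≤ c n + ‖T (x n) - T (x (n+1))‖ := tri _ _ _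
      have h2 : ‖T (x n) - T (x (n+1))‖ ≤ ‖x n - x (n+1)‖ := hT _ _
      rw [n4 n] at h2
      linarith
    have i6 : c (n+1) ≤ (1 - t n) * ‖x n - T (x (n+1))‖ + t n * ‖y n - x (n+1)‖ := by
      have h0 : c (n+1) = ‖x (n+1) - T (x (n+1))‖ := rfl
      rw [h0, e6 (T (x (n+1))) n]
      calc ‖(1 - t n) • (x n - T (x (n+1))) + t n • (T (y n) - T (x (n+1)))‖
          ≤ ‖(1 - t n) • (x n - T (x (n+1)))‖ + ‖t n • (T (y n) - T (x (n+1)))‖ :=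
            norm_add_le _ _
        _ = (1 - t n) * ‖x n - T (x (n+1))‖ + t n * ‖T (y n) - T (x (n+1))‖ := by
            rw [norm_smul, norm_smul, Real.norm_eq_abs, Real.norm_eq_abs,
              abs_of_nonneg (by linarith [ht1 n]), abs_of_nonneg (ht0 n)]
        _ ≤ (1 - t n) * ‖x n - T (x (n+1))‖ + t n * ‖y n - x (n+1)‖ := by
            have := mul_le_mul_of_nonneg_left (hT (y n) (x (n+1))) (ht0 n)
            linarith
    have h5 : 0 ≤ 1 - t n := by linarith [ht1 n]
    nlinarith [mul_le_mul_of_nonneg_left i5 h5, mul_le_mul_of_nonneg_left i4 (ht0 n),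
      mul_le_mul_of_nonneg_left i2 (mul_nonneg (ht0 n) h5), hc0 n, hs0 n, ht0 n]
  -- convergence of c to 0
  have hczero : Tendsto c atTop (nhds 0) := by
    obtain ⟨L, hL⟩ := exists_tendsto_of_le_add hc0
      (ε := fun n => (t n * (1 - t n) * s n) * (4 * ‖x 0 - p‖))
      (fun n => by
        have h1 := hstep n
        have h2 := hca n
        have h3 : 0 ≤ t n * (1 - t n) * s n :=
          mul_nonneg (mul_nonneg (ht0 n) (by linarith [ht1 n])) (hs0 n)
        show c (n + 1) ≤ c n + t n * (1 - t n) * s n * (4 * ‖x 0 - p‖)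
        nlinarith [mul_le_mul_of_nonneg_left h2 h3])
      (fun n => by
        have h3 : 0 ≤ t n * (1 - t n) * s n :=
          mul_nonneg (mul_nonneg (ht0 n) (by linarith [ht1 n])) (hs0 n)
        show 0 ≤ t n * (1 - t n) * s n * (4 * ‖x 0 - p‖)
        positivity)
      (hconv.mul_right _)
    have hL0 : 0 ≤ L := ge_of_tendsto' hL hc0
    rcases eq_or_lt_of_le hL0 with hL0' | hL0'
    · rwa [← hL0'] at hL
    · exfalso
      have hev : ∀ᶠ n in atTop, L / 2 < c n := hL.eventually (lt_mem_nhds (by linarith))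
      obtain ⟨N, hN⟩ := eventually_atTop.1 hev
      have hsum : Summable (fun n => t n * (1 - t n)) := by
        rw [← summable_nat_add_iff N]
        refine Summable.of_nonneg_of_le
          (fun n => mul_nonneg (ht0 _) (by linarith [ht1 (n + N)]))
          (fun n => ?_)
          (((summable_nat_add_iff N).2 summable2).mul_left (4 / L^2))
        have hcn := hN (n + N) (by omega)
        have h5 : 0 ≤ t (n + N) * (1 - t (n + N)) :=
          mul_nonneg (ht0 _) (by linarith [ht1 (n + N)])
        have hc2 : L^2 / 4 ≤ c (n + N) ^ 2 := by nlinarith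
        rw [div_mul_eq_mul_div, le_div_iff₀ (by positivity)]
        nlinarith
      exact not_tendsto_atTop_of_tendsto_nhds hsum.hasSum.tendsto_sum_nat hdiv
  -- bounds
  set R : ℝ := ‖x 0 - p‖ + ‖p‖ with hR
  have hxR : ∀ n, ‖x n‖ ≤ R := by
    intro n
    have h1 : ‖x n‖ ≤ ‖x n - p‖ + ‖p‖ := by
      simpa [sub_add_cancel] using norm_add_le (x n - p) p
    have := haP n
    simp only [hR]
    linarith
  -- move to the weak dual
  set Φ : H → WeakDual ℝ H := fun z => StrongDual.toWeakDual (InnerProductSpace.toDual ℝ H z)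
    with hΦ
  have hΦapp : ∀ (z v : H), Φ z v = ⟪z, v⟫ := fun z v => InnerProductSpace.toDual_apply_apply
  set K : Set (WeakDual ℝ H) :=
    WeakDual.toStrongDual ⁻¹' Metric.closedBall (0 : StrongDual ℝ H) R with hK
  have hKcompact : IsCompact K := WeakDual.isCompact_closedBall (0 : StrongDual ℝ H) R
  have hmemK : ∀ n, Φ (x n) ∈ K := by
    intro n
    simp only [hK, Set.mem_preimage, Metric.mem_closedBall, dist_zero_right]
    have : ‖(WeakDual.toStrongDual (Φ (x n)) : StrongDual ℝ H)‖
        = ‖InnerProductSpace.toDual ℝ H (x n)‖ := rfl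
    rw [this, LinearIsometryEquiv.norm_map]
    exact hxR n
  -- every cluster point is (the image of) a fixed point, with weak convergence along some
  -- ultrafilter
  have hkey : ∀ b : WeakDual ℝ H, MapClusterPt b atTop (fun n => Φ (x n)) →
      ∃ U : Ultrafilter ℕ, (U : Filter ℕ) ≤ atTop ∧
        (∀ v : H, Tendsto (fun n => ⟪x n, v⟫) U
          (nhds ⟪(InnerProductSpace.toDual ℝ H).symm (WeakDual.toStrongDual b), v⟫)) ∧
        T ((InnerProductSpace.toDual ℝ H).symm (WeakDual.toStrongDual b))
          = (InnerProductSpace.toDual ℝ H).symm (WeakDual.toStrongDual b) := by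
    intro b hb
    obtain ⟨U, hUle, hUt⟩ := mapClusterPt_iff_ultrafilter.mp hb
    set u : H := (InnerProductSpace.toDual ℝ H).symm (WeakDual.toStrongDual b) with hu
    have hweak : ∀ v : H, Tendsto (fun n => ⟪x n, v⟫) U (nhds ⟪u, v⟫) := by
      intro v
      have hcont := (WeakDual.eval_continuous (𝕜 := ℝ) (E := H) v).tendsto b
      have h1 : Tendsto (fun n => Φ (x n) v) U (nhds (b v)) := hcont.comp hUt
      have h2 : (fun n => Φ (x n) v) = fun n => ⟪x n, v⟫ := funext fun n => hΦapp _ _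
      have h3 : b v = ⟪u, v⟫ := by
        rw [hu]
        exact (InnerProductSpace.toDual_symm_apply).symm
      rwa [h2, h3] at h1
    refine ⟨U, hUle, hweak, ?_⟩
    -- demiclosedness
    have hcu : Tendsto c U (nhds 0) := hczero.mono_left hUle
    have hbd : ∀ n, ‖x n - u‖ ≤ R + ‖u‖ := by
      intro n
      have h1 : ‖x n - u‖ ≤ ‖x n‖ + ‖u‖ := norm_sub_le _ _
      have := hxR n
      linarith
    have hconstU : ∀ r : ℝ, Tendsto (fun _ : ℕ => r) (U : Filter ℕ) (nhds r) :=
      fun r => tendsto_const_nhds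
    obtain ⟨ℓ, -, hℓ'⟩ := isCompact_Icc.ultrafilter_le_nhds'
      (U.map (fun n => ‖x n - u‖ ^ 2))
      (Ultrafilter.mem_map.2 (Filter.univ_mem' fun n =>
        Set.mem_Icc.2 ⟨by positivity, pow_le_pow_left₀ (norm_nonneg _) (hbd n) 2⟩))
    have hℓ : Tendsto (fun n => ‖x n - u‖ ^ 2) U (nhds ℓ) := by
      rwa [Ultrafilter.coe_map] at hℓ'
    have hcross : ∀ w : H, Tendsto (fun n => ⟪x n - u, w⟫) U (nhds 0) := by
      intro w
      have h1 : (fun n => ⟪x n - u, w⟫) = fun n => ⟪x n, w⟫ - ⟪u, w⟫ :=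
        funext fun n => inner_sub_left _ _ _
      rw [h1]
      simpa using (hweak w).sub (hconstU ⟪u, w⟫)
    have hexp : ∀ n, ‖x n - T u‖ ^ 2
        = ‖x n - u‖ ^ 2 + (2 * ⟪x n - u, u - T u⟫ + ‖u - T u‖ ^ 2) := by
      intro n
      have h1 := norm_add_sq_real (x n - u) (u - T u)
      rw [sub_add_sub_cancel] at h1
      linarith
    have lim1 : Tendsto (fun n => ‖x n - T u‖ ^ 2) U (nhds (ℓ + ‖u - T u‖ ^ 2)) := by
      have h1 := hℓ.add (((hcross (u - T u)).const_mul 2).add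
        (hconstU (‖u - T u‖ ^ 2)))
      simp only [mul_zero, zero_add] at h1
      exact h1.congr fun n => (hexp n).symm
    have hle2 : ∀ n, ‖x n - T u‖ ^ 2 ≤ (c n + ‖x n - u‖) ^ 2 := by
      intro n
      refine pow_le_pow_left₀ (norm_nonneg _) ?_ 2
      have h1 : ‖x n - T u‖ ≤ c n + ‖T (x n) - T u‖ := tri _ _ _
      have h2 := hT (x n) u
      linarith
    have lim2 : Tendsto (fun n => (c n + ‖x n - u‖) ^ 2) U (nhds ℓ) := by
      have hmid : Tendsto (fun n => 2 * (c n * ‖x n - u‖)) U (nhds 0) := by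
        refine squeeze_zero (fun n => by positivity) (g := fun n => 2 * (c n * (R + ‖u‖)))
          (fun n => by
            show 2 * (c n * ‖x n - u‖) ≤ 2 * (c n * (R + ‖u‖))
            nlinarith [hbd n, hc0 n, norm_nonneg (x n - u)]) ?_
        have := (hcu.mul (hconstU (R + ‖u‖))).const_mul 2
        simpa using this
      have hsq : Tendsto (fun n => c n ^ 2) U (nhds 0) := by
        have := hcu.pow 2
        simpa using this
      have h1 := (hsq.add hmid).add hℓ
      simp only [zero_add] at h1
      exact h1.congr fun n => by ring
    have hfinal : ℓ + ‖u - T u‖ ^ 2 ≤ ℓ := le_of_tendsto_of_tendsto' lim1 lim2 hle2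
    have h0 : ‖u - T u‖ ^ 2 = 0 := le_antisymm (by linarith) (by positivity)
    have h1 : u - T u = 0 := by
      have := pow_eq_zero_iff (n := 2) (by norm_num) |>.mp h0
      exact norm_eq_zero.mp this
    exact (sub_eq_zero.mp h1).symm
  -- existence of a cluster point
  have hmapne : (Filter.map (fun n => Φ (x n)) atTop).NeBot := Filter.map_neBot
  obtain ⟨b0, hb0K, hb0⟩ := hKcompact.exists_clusterPt
    (f := Filter.map (fun n => Φ (x n)) atTop)
    (le_principal_iff.2 (Filter.mem_map.2 (Filter.univ_mem' hmemK)))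
  have hb0' : MapClusterPt b0 atTop (fun n => Φ (x n)) := hb0
  set q : H := (InnerProductSpace.toDual ℝ H).symm (WeakDual.toStrongDual b0) with hq
  obtain ⟨U0, hU0le, hU0weak, hq0fix⟩ := hkey b0 hb0'
  refine ⟨q, hq0fix, ?_⟩
  -- uniqueness of cluster points
  have huniq : ∀ b ∈ K, MapClusterPt b atTop (fun n => Φ (x n)) → b = b0 := by
    intro b _ hb
    obtain ⟨U, hUle, hUweak, hufix⟩ := hkey b hb
    set u : H := (InnerProductSpace.toDual ℝ H).symm (WeakDual.toStrongDual b) with hu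
    obtain ⟨Au, hAu0, hAu⟩ := hAlim u hufix
    obtain ⟨Aq, hAq0, hAq⟩ := hAlim q hq0fix
    have hIP : Tendsto (fun n => ⟪x n, u - q⟫) atTop
        (nhds ((Aq^2 - Au^2 - ‖q‖^2 + ‖u‖^2) / 2)) := by
      have hAu2 : Tendsto (fun n => ‖x n - u‖^2) atTop (nhds (Au^2)) := by
        have := hAu.mul hAu
        simpa [pow_two] using this
      have hAq2 : Tendsto (fun n => ‖x n - q‖^2) atTop (nhds (Aq^2)) := by
        have := hAq.mul hAq
        simpa [pow_two] using this
      have hid : ∀ n, ⟪x n, u - q⟫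
          = (‖x n - q‖^2 - ‖x n - u‖^2 - ‖q‖^2 + ‖u‖^2) / 2 := by
        intro n
        have h1 := norm_sub_sq_real (x n) q
        have h2 := norm_sub_sq_real (x n) u
        rw [inner_sub_right]
        linarith
      have h3 := (((hAq2.sub hAu2).sub
        (tendsto_const_nhds (x := ‖q‖^2))).add
        (tendsto_const_nhds (x := ‖u‖^2))).div_const 2
      exact h3.congr fun n => (hid n).symm
    have hru : ⟪u, u - q⟫ = (Aq^2 - Au^2 - ‖q‖^2 + ‖u‖^2) / 2 :=
      tendsto_nhds_unique (hUweak (u - q)) (hIP.mono_left hUle)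
    have hrq : ⟪q, u - q⟫ = (Aq^2 - Au^2 - ‖q‖^2 + ‖u‖^2) / 2 :=
      tendsto_nhds_unique (hU0weak (u - q)) (hIP.mono_left hU0le)
    have hzero : ⟪u - q, u - q⟫ = (0:ℝ) := by
      rw [inner_sub_left, hru, hrq]
      ring
    have huq : u = q := sub_eq_zero.mp (inner_self_eq_zero.mp hzero)
    have h1 : WeakDual.toStrongDual b = WeakDual.toStrongDual b0 :=
      (InnerProductSpace.toDual ℝ H).symm.injective huq
    exact WeakDual.toStrongDual.injective h1
  have htendΦ : Tendsto (fun n => Φ (x n)) atTop (nhds b0) :=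
    hKcompact.tendsto_nhds_of_unique_mapClusterPt (Eventually.of_forall hmemK) huniq
  intro v
  have hcont := (WeakDual.eval_continuous (𝕜 := ℝ) (E := H) v).tendsto b0
  have h1 : Tendsto (fun n => Φ (x n) v) atTop (nhds (b0 v)) := hcont.comp htendΦ
  have h2 : (fun n => Φ (x n) v) = fun n => ⟪x n, v⟫ := funext fun n => hΦapp _ _
  have h3 : b0 v = ⟪q, v⟫ := by
    rw [hq]
    exact (InnerProductSpace.toDual_symm_apply).symm
  rwa [h2, h3] at h1
end

section
/- Let H be a real Hilbert space and let T : H → H be a nonexpansive mapping with Fix(T) ≠ ∅. Suppose the sequences (t_n), (s_n) in [0,1] satisfy ∑_{n=0}^∞ t_n (1 − t_n) = ∞, ∑_{n=0}^∞ (1 − t_n) s_n < ∞ and limsup_{n→∞} s_n < 1. Then for every x_0 ∈ H, the Ishikawa iteration (x_n) converges weakly to a point of Fix(T). -/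
open Filter
open scoped RealInnerProductSpace

lemma combo_sq {H : Type*} [NormedAddCommGroup H] [InnerProductSpace ℝ H]
    (a b : H) (τ : ℝ) :
    ‖(1 - τ) • a + τ • b‖ ^ 2
      = (1 - τ) * ‖a‖ ^ 2 + τ * ‖b‖ ^ 2 - τ * (1 - τ) * ‖a - b‖ ^ 2 := by
  simp only [← real_inner_self_eq_norm_sq, inner_add_left, inner_add_right,
    inner_sub_left, inner_sub_right, real_inner_smul_left, real_inner_smul_right,
    real_inner_comm b a]
  ring

lemma ultra_lim {u : ℕ → ℝ} {B : ℝ} (hB : ∀ n, |u n| ≤ B)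
    (U : Ultrafilter ℕ) : ∃ L, |L| ≤ B ∧ Tendsto u ↑U (nhds L) := by
  have hc : IsCompact (Set.Icc (-B) B) := isCompact_Icc
  have hle : ↑(U.map u) ≤ Filter.principal (Set.Icc (-B) B) := by
    rw [Ultrafilter.coe_map, Filter.le_principal_iff]
    exact Filter.mem_map.2 (by
      have : ∀ n, u n ∈ Set.Icc (-B) B := fun n => abs_le.mp (hB n)
      exact Filter.univ_mem' this)
  obtain ⟨L, hL, hconv⟩ := hc.ultrafilter_le_nhds (U.map u) hle
  exact ⟨L, abs_le.mpr hL, hconv⟩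

lemma exists_weak_lim {H : Type*} [NormedAddCommGroup H] [InnerProductSpace ℝ H]
    [CompleteSpace H] (x : ℕ → H) (R : ℝ) (hR : ∀ n, ‖x n‖ ≤ R) (U : Ultrafilter ℕ) :
    ∃ w : H, ∀ v, Tendsto (fun n => ⟪x n, v⟫) ↑U (nhds ⟪w, v⟫) := by
  have hb : ∀ v : H, ∀ n, |⟪x n, v⟫| ≤ R * ‖v‖ := by
    intro v n
    calc |⟪x n, v⟫| ≤ ‖x n‖ * ‖v‖ := abs_real_inner_le_norm _ _
      _ ≤ R * ‖v‖ := mul_le_mul_of_nonneg_right (hR n) (norm_nonneg v)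
  have key : ∀ v : H, ∃ L, |L| ≤ R * ‖v‖ ∧ Tendsto (fun n => ⟪x n, v⟫) ↑U (nhds L) :=
    fun v => ultra_lim (hb v) U
  choose L hLb hLt using key
  have hadd : ∀ v v', L (v + v') = L v + L v' := by
    intro v v'
    have h1 : Tendsto (fun n => ⟪x n, v + v'⟫) ↑U (nhds (L v + L v')) := by
      simpa [inner_add_right] using (hLt v).add (hLt v')
    exact tendsto_nhds_unique (hLt (v + v')) h1
  have hsmul : ∀ (c : ℝ) (v : H), L (c • v) = c * L v := by
    intro c v
    have h1 : Tendsto (fun n => ⟪x n, c • v⟫) ↑U (nhds (c * L v)) := by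
      simpa [real_inner_smul_right] using (hLt v).const_mul c
    exact tendsto_nhds_unique (hLt (c • v)) h1
  let f : H →ₗ[ℝ] ℝ :=
    { toFun := L, map_add' := hadd, map_smul' := hsmul }
  have hfb : ∀ v, ‖f v‖ ≤ R * ‖v‖ := fun v => hLb v
  let F : H →L[ℝ] ℝ := LinearMap.mkContinuous f R hfb
  refine ⟨(InnerProductSpace.toDual ℝ H).symm F, fun v => ?_⟩
  have : ⟪(InnerProductSpace.toDual ℝ H).symm F, v⟫ = F v := by
    rw [← InnerProductSpace.toDual_apply_apply, LinearIsometryEquiv.apply_symm_apply]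
  rw [this]
  exact hLt v

set_option maxHeartbeats 1600000 in
theorem stmt_16 (H : Type*) [NormedAddCommGroup H] [InnerProductSpace ℝ H] [CompleteSpace H]
    (T : H → H) (hT : ∀ x y : H, ‖T x - T y‖ ≤ ‖x - y‖)
    (hF : ∃ p : H, T p = p)
    (t s : ℕ → ℝ) (ht : ∀ n, t n ∈ Set.Icc (0:ℝ) 1) (hs : ∀ n, s n ∈ Set.Icc (0:ℝ) 1)
    (hdiv : Tendsto (fun N => ∑ n ∈ Finset.range N, t n * (1 - t n)) atTop atTop)
    (hconv : Summable (fun n => (1 - t n) * s n))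
    (hls : limsup s atTop < 1)
    (x y : ℕ → H)
    (hy : ∀ n, y n = (1 - s n) • x n + s n • T (x n))
    (hx : ∀ n, x (n + 1) = (1 - t n) • x n + t n • T (y n)) :
    ∃ q : H, T q = q ∧ ∀ v : H, Tendsto (fun n => ⟪x n, v⟫) atTop (nhds ⟪q, v⟫) := by
  obtain ⟨p, hp⟩ := hF
  have ht0 : ∀ n, 0 ≤ t n := fun n => (ht n).1
  have ht1 : ∀ n, t n ≤ 1 := fun n => (ht n).2
  have hs0 : ∀ n, 0 ≤ s n := fun n => (hs n).1
  have hs1 : ∀ n, s n ≤ 1 := fun n => (hs n).2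
  -- y-step bound for arbitrary fixed point
  have hyb : ∀ r : H, T r = r → ∀ n, ‖y n - r‖ ≤ ‖x n - r‖ := by
    intro r hr n
    have e : y n - r = (1 - s n) • (x n - r) + s n • (T (x n) - r) := by
      rw [hy n]; module
    have h2 : ‖T (x n) - r‖ ≤ ‖x n - r‖ := by
      conv_lhs => rw [← hr]
      exact hT _ _
    calc ‖y n - r‖ ≤ ‖(1 - s n) • (x n - r)‖ + ‖s n • (T (x n) - r)‖ := by
          rw [e]; exact norm_add_le _ _
      _ = (1 - s n) * ‖x n - r‖ + s n * ‖T (x n) - r‖ := by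
          rw [norm_smul, norm_smul, Real.norm_eq_abs, Real.norm_eq_abs,
            abs_of_nonneg (by linarith [hs1 n]), abs_of_nonneg (hs0 n)]
      _ ≤ ‖x n - r‖ := by nlinarith [hs0 n, hs1 n, norm_nonneg (x n - r)]
  have hTyb : ∀ r : H, T r = r → ∀ n, ‖T (y n) - r‖ ≤ ‖x n - r‖ := by
    intro r hr n
    calc ‖T (y n) - r‖ = ‖T (y n) - T r‖ := by rw [hr]
      _ ≤ ‖y n - r‖ := hT _ _
      _ ≤ ‖x n - r‖ := hyb r hr n
  -- Fejér monotonicity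
  have hdec : ∀ r : H, T r = r → ∀ n, ‖x (n + 1) - r‖ ≤ ‖x n - r‖ := by
    intro r hr n
    have e : x (n + 1) - r = (1 - t n) • (x n - r) + t n • (T (y n) - r) := by
      rw [hx n]; module
    calc ‖x (n + 1) - r‖ ≤ ‖(1 - t n) • (x n - r)‖ + ‖t n • (T (y n) - r)‖ := by
          rw [e]; exact norm_add_le _ _
      _ = (1 - t n) * ‖x n - r‖ + t n * ‖T (y n) - r‖ := by
          rw [norm_smul, norm_smul, Real.norm_eq_abs, Real.norm_eq_abs,
            abs_of_nonneg (by linarith [ht1 n]), abs_of_nonneg (ht0 n)]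
      _ ≤ ‖x n - r‖ := by nlinarith [ht0 n, ht1 n, norm_nonneg (x n - r), hTyb r hr n]
  have hanti : ∀ r : H, T r = r → Antitone (fun n => ‖x n - r‖) :=
    fun r hr => antitone_nat_of_succ_le (hdec r hr)
  have hxb : ∀ n, ‖x n - p‖ ≤ ‖x 0 - p‖ := fun n => hanti p hp (Nat.zero_le n)
  set R : ℝ := ‖x 0 - p‖ + ‖p‖ with hRdef
  have hR : ∀ n, ‖x n‖ ≤ R := by
    intro n
    calc ‖x n‖ = ‖(x n - p) + p‖ := by rw [sub_add_cancel]
      _ ≤ ‖x n - p‖ + ‖p‖ := norm_add_le _ _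
      _ ≤ R := by have := hxb n; rw [hRdef]; linarith
  -- square inequality
  have hsq : ∀ n, ‖x (n + 1) - p‖ ^ 2
      ≤ ‖x n - p‖ ^ 2 - t n * (1 - t n) * ‖x n - T (y n)‖ ^ 2 := by
    intro n
    have e : x (n + 1) - p = (1 - t n) • (x n - p) + t n • (T (y n) - p) := by
      rw [hx n]; module
    have e2 : (x n - p) - (T (y n) - p) = x n - T (y n) := by abel
    have := combo_sq (x n - p) (T (y n) - p) (t n)
    rw [e2] at this
    rw [e, this]
    have h1 : ‖T (y n) - p‖ ≤ ‖x n - p‖ := hTyb p hp n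
    have h2 : ‖T (y n) - p‖ ^ 2 ≤ ‖x n - p‖ ^ 2 :=
      pow_le_pow_left₀ (norm_nonneg _) h1 2
    nlinarith [ht0 n]
  -- bounded partial sums
  have hpsum : ∀ N, ∑ n ∈ Finset.range N, t n * (1 - t n) * ‖x n - T (y n)‖ ^ 2
      ≤ ‖x 0 - p‖ ^ 2 := by
    intro N
    have h1 : ∑ n ∈ Finset.range N, t n * (1 - t n) * ‖x n - T (y n)‖ ^ 2
        ≤ ∑ n ∈ Finset.range N, (‖x n - p‖ ^ 2 - ‖x (n + 1) - p‖ ^ 2) := by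
      apply Finset.sum_le_sum
      intro n _
      have := hsq n
      linarith
    have h2 : ∑ n ∈ Finset.range N, (‖x n - p‖ ^ 2 - ‖x (n + 1) - p‖ ^ 2)
        = ‖x 0 - p‖ ^ 2 - ‖x N - p‖ ^ 2 :=
      Finset.sum_range_sub' (fun n => ‖x n - p‖ ^ 2) N
    have h3 : (0:ℝ) ≤ ‖x N - p‖ ^ 2 := by positivity
    linarith
  set c : ℕ → ℝ := fun n => ‖x n - T (x n)‖ with hcdef
  have hc_nonneg : ∀ n, 0 ≤ c n := fun n => norm_nonneg _
  have hxyn : ∀ n, ‖y n - x n‖ = s n * c n := by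
    intro n
    have e : y n - x n = s n • (T (x n) - x n) := by rw [hy n]; module
    rw [e, norm_smul, Real.norm_eq_abs, abs_of_nonneg (hs0 n), hcdef, ← norm_neg]
    congr 1; abel
  -- lower bound on ‖x n - T (y n)‖
  have hlow : ∀ n, (1 - s n) * c n ≤ ‖x n - T (y n)‖ := by
    intro n
    have h1 : ‖T (x n) - T (y n)‖ ≤ s n * c n := by
      calc ‖T (x n) - T (y n)‖ ≤ ‖x n - y n‖ := hT _ _
        _ = s n * c n := by rw [← norm_neg]; simpa [neg_sub] using hxyn n
    have h2 : c n ≤ ‖x n - T (y n)‖ + ‖T (y n) - T (x n)‖ := by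
      have : x n - T (x n) = (x n - T (y n)) + (T (y n) - T (x n)) := by abel
      calc c n = ‖(x n - T (y n)) + (T (y n) - T (x n))‖ := by rw [hcdef]; rw [← this]
        _ ≤ ‖x n - T (y n)‖ + ‖T (y n) - T (x n)‖ := norm_add_le _ _
    have h3 : ‖T (y n) - T (x n)‖ = ‖T (x n) - T (y n)‖ := by rw [← norm_neg]; congr 1; abel
    nlinarith [hs0 n]
  -- eventually s n ≤ 1 - δ
  obtain ⟨δ, hδpos, N₀, hN₀⟩ :
      ∃ δ > (0:ℝ), ∃ N₀, ∀ n ≥ N₀, s n ≤ 1 - δ := by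
    set b : ℝ := (limsup s atTop + 1) / 2 with hbdef
    have hb1 : limsup s atTop < b := by rw [hbdef]; linarith
    have hb2 : b < 1 := by rw [hbdef]; linarith
    have hbdd : IsBoundedUnder (· ≤ ·) atTop s :=
      isBoundedUnder_of ⟨1, fun n => hs1 n⟩
    have hev : ∀ᶠ n in atTop, s n < b := eventually_lt_of_limsup_lt hb1 hbdd
    obtain ⟨N₀, hN₀⟩ := eventually_atTop.mp hev
    exact ⟨1 - b, by linarith, N₀, fun n hn => by have := hN₀ n hn; linarith⟩
  -- frequently small c
  have hfreq : ∀ ε > (0:ℝ), ∀ N, ∃ n ≥ N, c n < ε := by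
    intro ε hε N
    by_contra hcon
    push_neg at hcon
    set M := max N N₀ with hM
    have hβ : ∀ n ≥ M, (δ * ε) ^ 2 * (t n * (1 - t n)) ≤ t n * (1 - t n) * ‖x n - T (y n)‖ ^ 2 := by
      intro n hn
      have h1 : s n ≤ 1 - δ := hN₀ n (le_trans (le_max_right _ _) hn)
      have h2 : ε ≤ c n := hcon n (le_trans (le_max_left _ _) hn)
      have h3 : δ * ε ≤ (1 - s n) * c n := by nlinarith
      have h4 : δ * ε ≤ ‖x n - T (y n)‖ := le_trans h3 (hlow n)
      have h5 : (δ * ε) ^ 2 ≤ ‖x n - T (y n)‖ ^ 2 :=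
        pow_le_pow_left₀ (by positivity) h4 2
      have h6 : 0 ≤ t n * (1 - t n) := mul_nonneg (ht0 n) (by linarith [ht1 n])
      nlinarith
    -- partial sums of t(1-t) are bounded, contradiction with hdiv
    have hbound : ∀ K, ∑ n ∈ Finset.range K, t n * (1 - t n)
        ≤ ∑ n ∈ Finset.range M, t n * (1 - t n) + ‖x 0 - p‖ ^ 2 / (δ * ε) ^ 2 := by
      intro K
      rcases le_or_gt K M with hKM | hKM
      · have h1 : ∑ n ∈ Finset.range K, t n * (1 - t n)
            ≤ ∑ n ∈ Finset.range M, t n * (1 - t n) := by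
          apply Finset.sum_le_sum_of_subset_of_nonneg
          · exact Finset.range_subset_range.mpr hKM
          · intro n _ _; exact mul_nonneg (ht0 n) (by linarith [ht1 n])
        have h2 : (0:ℝ) ≤ ‖x 0 - p‖ ^ 2 / (δ * ε) ^ 2 := by positivity
        linarith
      · have hsplit : ∑ n ∈ Finset.range K, t n * (1 - t n)
            = ∑ n ∈ Finset.range M, t n * (1 - t n) + ∑ n ∈ Finset.Ico M K, t n * (1 - t n) := by
          rw [← Finset.sum_range_add_sum_Ico _ (le_of_lt hKM)]
        have key : (δ * ε) ^ 2 * ∑ n ∈ Finset.Ico M K, t n * (1 - t n) ≤ ‖x 0 - p‖ ^ 2 := by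
          calc (δ * ε) ^ 2 * ∑ n ∈ Finset.Ico M K, t n * (1 - t n)
              = ∑ n ∈ Finset.Ico M K, (δ * ε) ^ 2 * (t n * (1 - t n)) := by
                rw [Finset.mul_sum]
            _ ≤ ∑ n ∈ Finset.Ico M K, t n * (1 - t n) * ‖x n - T (y n)‖ ^ 2 :=
                Finset.sum_le_sum (fun n hn => hβ n (Finset.mem_Ico.mp hn).1)
            _ ≤ ∑ n ∈ Finset.range K, t n * (1 - t n) * ‖x n - T (y n)‖ ^ 2 := by
                apply Finset.sum_le_sum_of_subset_of_nonneg
                · intro n hn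
                  exact Finset.mem_range.mpr (Finset.mem_Ico.mp hn).2
                · intro n _ _
                  have := mul_nonneg (ht0 n) (by linarith [ht1 n] : (0:ℝ) ≤ 1 - t n)
                  positivity
            _ ≤ ‖x 0 - p‖ ^ 2 := hpsum K
        have hpos : (0:ℝ) < (δ * ε) ^ 2 := by positivity
        rw [hsplit]
        have : ∑ n ∈ Finset.Ico M K, t n * (1 - t n) ≤ ‖x 0 - p‖ ^ 2 / (δ * ε) ^ 2 :=
          (le_div_iff₀ hpos).mpr (by linarith [key])
        linarith
    obtain ⟨K, hK⟩ := (tendsto_atTop.mp hdiv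
      (∑ n ∈ Finset.range M, t n * (1 - t n) + ‖x 0 - p‖ ^ 2 / (δ * ε) ^ 2 + 1)).exists
    linarith [hbound K]
  -- quasi-decrease of c
  have hquasi : ∀ n, c (n + 1) ≤ c n + 2 * ((1 - t n) * s n) * c n := by
    intro n
    set a : ℝ := ‖x n - T (y n)‖ with hadef
    have ha0 : 0 ≤ a := norm_nonneg _
    have h1 : ‖T (x n) - T (y n)‖ ≤ s n * c n := by
      calc ‖T (x n) - T (y n)‖ ≤ ‖x n - y n‖ := hT _ _
        _ = s n * c n := by rw [← norm_neg]; simpa [neg_sub] using hxyn n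
    have h2 : a ≤ c n + s n * c n := by
      calc a = ‖(x n - T (x n)) + (T (x n) - T (y n))‖ := by
            rw [hadef]; congr 1; abel
        _ ≤ ‖x n - T (x n)‖ + ‖T (x n) - T (y n)‖ := norm_add_le _ _
        _ ≤ c n + s n * c n := by rw [hcdef]; exact add_le_add le_rfl h1
    have h3 : ‖x (n + 1) - T (y n)‖ = (1 - t n) * a := by
      have e : x (n + 1) - T (y n) = (1 - t n) • (x n - T (y n)) := by rw [hx n]; module
      rw [e, norm_smul, Real.norm_eq_abs, abs_of_nonneg (by linarith [ht1 n])]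
    have h5 : ‖y n - T (y n)‖ ≤ (1 - s n) * a + s n * (s n * c n) := by
      have e : y n - T (y n) = (1 - s n) • (x n - T (y n)) + s n • (T (x n) - T (y n)) := by
        rw [hy n]; module
      calc ‖y n - T (y n)‖ ≤ ‖(1 - s n) • (x n - T (y n))‖ + ‖s n • (T (x n) - T (y n))‖ := by
            rw [e]; exact norm_add_le _ _
        _ = (1 - s n) * a + s n * ‖T (x n) - T (y n)‖ := by
            rw [norm_smul, norm_smul, Real.norm_eq_abs, Real.norm_eq_abs,
              abs_of_nonneg (by linarith [hs1 n]), abs_of_nonneg (hs0 n)]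
        _ ≤ (1 - s n) * a + s n * (s n * c n) := by
            have := mul_le_mul_of_nonneg_left h1 (hs0 n); linarith
    have h4 : ‖y n - x (n + 1)‖ ≤ (1 - t n) * (s n * c n) + t n * ((1 - s n) * a + s n * (s n * c n)) := by
      have e : y n - x (n + 1) = (1 - t n) • (y n - x n) + t n • (y n - T (y n)) := by
        rw [hx n]; module
      calc ‖y n - x (n + 1)‖ ≤ ‖(1 - t n) • (y n - x n)‖ + ‖t n • (y n - T (y n))‖ := by
            rw [e]; exact norm_add_le _ _
        _ = (1 - t n) * ‖y n - x n‖ + t n * ‖y n - T (y n)‖ := by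
            rw [norm_smul, norm_smul, Real.norm_eq_abs, Real.norm_eq_abs,
              abs_of_nonneg (by linarith [ht1 n]), abs_of_nonneg (ht0 n)]
        _ ≤ (1 - t n) * (s n * c n) + t n * ((1 - s n) * a + s n * (s n * c n)) := by
            rw [hxyn n]
            have := mul_le_mul_of_nonneg_left h5 (ht0 n)
            linarith
    have h6 : c (n + 1) ≤ ‖x (n + 1) - T (y n)‖ + ‖T (y n) - T (x (n + 1))‖ := by
      calc c (n + 1) = ‖(x (n + 1) - T (y n)) + (T (y n) - T (x (n + 1)))‖ := by
            rw [hcdef]; congr 1; abel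
        _ ≤ _ := norm_add_le _ _
    have h7 : ‖T (y n) - T (x (n + 1))‖ ≤ ‖y n - x (n + 1)‖ := hT _ _
    have hts : (0:ℝ) ≤ 1 - t n * s n := by nlinarith [ht0 n, ht1 n, hs0 n, hs1 n]
    have h8 : (1 - t n * s n) * a ≤ (1 - t n * s n) * (c n + s n * c n) :=
      mul_le_mul_of_nonneg_left h2 hts
    nlinarith [hs0 n, hs1 n, ht0 n, ht1 n, hc_nonneg n]
  -- c is bounded
  set B : ℝ := 2 * ‖x 0 - p‖ with hBdef
  have hB0 : 0 ≤ B := by positivity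
  have hcB : ∀ n, c n ≤ B := by
    intro n
    have h1 : ‖p - T (x n)‖ ≤ ‖p - x n‖ := by
      conv_lhs => rw [← hp]
      exact hT _ _
    have h2 : ‖p - x n‖ = ‖x n - p‖ := by rw [← norm_neg]; congr 1; abel
    calc c n = ‖(x n - p) + (p - T (x n))‖ := by rw [hcdef]; congr 1; abel
      _ ≤ ‖x n - p‖ + ‖p - T (x n)‖ := norm_add_le _ _
      _ ≤ 2 * ‖x n - p‖ := by rw [h2] at h1; linarith
      _ ≤ B := by rw [hBdef]; linarith [hxb n]
  set A : ℕ → ℝ := fun n => 2 * ((1 - t n) * s n) with hAdef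
  have hA0 : ∀ n, 0 ≤ A n :=
    fun n => by have := mul_nonneg (by linarith [ht1 n] : (0:ℝ) ≤ 1 - t n) (hs0 n); simp [hAdef]; linarith
  have hAsum : Summable A := (hconv.mul_left 2)
  have hstep : ∀ n, c (n + 1) ≤ c n + B * A n := by
    intro n
    have h1 := hquasi n
    have h2 : A n * c n ≤ A n * B := mul_le_mul_of_nonneg_left (hcB n) (hA0 n)
    have hAn : A n = 2 * ((1 - t n) * s n) := rfl
    rw [hAn] at h2 ⊢
    rw [mul_comm B _]
    linarith
  have hIco : ∀ n m, n ≤ m → c m ≤ c n + B * ∑ k ∈ Finset.Ico n m, A k := by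
    intro n m hnm
    induction m with
    | zero =>
      have : n = 0 := Nat.le_zero.mp hnm
      subst this; simp
    | succ m ih =>
      rcases Nat.lt_or_ge n (m + 1) with h | h
      · have hnm' : n ≤ m := Nat.lt_succ_iff.mp h
        have h1 := ih hnm'
        have h2 := hstep m
        have h3 : ∑ k ∈ Finset.Ico n (m + 1), A k
            = ∑ k ∈ Finset.Ico n m, A k + A m := Finset.sum_Ico_succ_top hnm' A
        rw [h3]; linarith
      · have : n = m + 1 := le_antisymm hnm h
        subst this; simp
  -- tail sums of A tend to 0
  have htail : Tendsto (fun n => ∑' k, A (k + n)) atTop (nhds 0) :=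
    tendsto_sum_nat_add A
  have hIcotail : ∀ n m, n ≤ m → ∑ k ∈ Finset.Ico n m, A k ≤ ∑' k, A (k + n) := by
    intro n m hnm
    have h1 : ∑ k ∈ Finset.Ico n m, A k = ∑ k ∈ Finset.range (m - n), A (n + k) := by
      rw [Finset.sum_Ico_eq_sum_range]
    rw [h1]
    have hsA : Summable (fun k => A (k + n)) := (summable_nat_add_iff n).mpr hAsum
    have h2 : ∑ k ∈ Finset.range (m - n), A (n + k) = ∑ k ∈ Finset.range (m - n), A (k + n) := by
      apply Finset.sum_congr rfl; intro k _; rw [add_comm]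
    rw [h2]
    exact Summable.sum_le_tsum _ (fun k _ => hA0 _) hsA
  -- c tends to 0
  have hc0 : Tendsto c atTop (nhds 0) := by
    rw [Metric.tendsto_atTop]
    intro ε hε
    have hε2 : 0 < ε / (2 * (B + 1)) := by positivity
    obtain ⟨N₂, hN₂⟩ := (Metric.tendsto_atTop.mp htail (ε / (2 * (B + 1))) hε2)
    obtain ⟨n₀, hn₀N, hn₀⟩ := hfreq (ε / 2) (by linarith) N₂
    refine ⟨n₀, fun m hm => ?_⟩
    have h1 : c m ≤ c n₀ + B * ∑ k ∈ Finset.Ico n₀ m, A k := hIco n₀ m hm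
    have h2 : ∑ k ∈ Finset.Ico n₀ m, A k ≤ ∑' k, A (k + n₀) := hIcotail n₀ m hm
    have h3 : |∑' k, A (k + n₀) - 0| < ε / (2 * (B + 1)) := by
      have := hN₂ n₀ hn₀N; rwa [Real.dist_eq] at this
    have h4 : ∑' k, A (k + n₀) < ε / (2 * (B + 1)) := by
      rw [sub_zero] at h3; exact lt_of_abs_lt h3
    have h5 : B * ∑ k ∈ Finset.Ico n₀ m, A k ≤ B * (ε / (2 * (B + 1))) := by
      apply mul_le_mul_of_nonneg_left _ hB0
      linarith
    have h6 : B * (ε / (2 * (B + 1))) < ε / 2 := by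
      rw [mul_div_assoc']
      rw [div_lt_div_iff₀ (by positivity) two_pos]
      nlinarith
    rw [Real.dist_eq, sub_zero, abs_of_nonneg (hc_nonneg m)]
    linarith
  -- demiclosedness along an ultrafilter
  have hdemi : ∀ (U : Ultrafilter ℕ), ↑U ≤ (atTop : Filter ℕ) → ∀ w : H,
      (∀ v, Tendsto (fun n => ⟪x n, v⟫) ↑U (nhds ⟪w, v⟫)) → T w = w := by
    intro U hU w hw
    set z : H := w - T w with hz
    have h1 : Tendsto (fun n => ⟪x n - w, z⟫) ↑U (nhds 0) := by
      have h := (hw z).sub_const ⟪w, z⟫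
      simp only [inner_sub_left, sub_self] at *
      exact h
    have hcU : Tendsto c ↑U (nhds 0) := hc0.mono_left hU
    have hb : ∀ n, ‖x n - w‖ ≤ R + ‖w‖ := fun n =>
      (norm_sub_le _ _).trans (by linarith [hR n])
    have h2 : ∀ n, ‖z‖ ^ 2 ≤ c n ^ 2 + 2 * c n * (R + ‖w‖) - 2 * ⟪x n - w, z⟫ := by
      intro n
      have e1 : x n - T w = (x n - w) + z := by rw [hz]; abel
      have e2 : ‖x n - T w‖ ^ 2 = ‖x n - w‖ ^ 2 + 2 * ⟪x n - w, z⟫ + ‖z‖ ^ 2 := by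
        rw [e1]; exact norm_add_sq_real _ _
      have e3 : ‖x n - T w‖ ≤ c n + ‖x n - w‖ := by
        have e : x n - T w = (x n - T (x n)) + (T (x n) - T w) := by abel
        calc ‖x n - T w‖ = ‖(x n - T (x n)) + (T (x n) - T w)‖ := by rw [← e]
          _ ≤ ‖x n - T (x n)‖ + ‖T (x n) - T w‖ := norm_add_le _ _
          _ ≤ c n + ‖x n - w‖ := add_le_add le_rfl (hT _ _)
      have e4 : ‖x n - T w‖ ^ 2 ≤ (c n + ‖x n - w‖) ^ 2 :=
        pow_le_pow_left₀ (norm_nonneg _) e3 2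
      nlinarith [hb n, hc_nonneg n, norm_nonneg (x n - w)]
    have h3 : Tendsto (fun n => c n ^ 2 + 2 * c n * (R + ‖w‖) - 2 * ⟪x n - w, z⟫)
        ↑U (nhds 0) := by
      have t1 : Tendsto (fun n => c n ^ 2) ↑U (nhds 0) := by
        simpa using hcU.pow 2
      have t2 : Tendsto (fun n => 2 * c n * (R + ‖w‖)) ↑U (nhds 0) := by
        have h := (hcU.const_mul 2).mul_const (R + ‖w‖)
        simpa [mul_assoc] using h
      have t3 := h1.const_mul 2
      have h := (t1.add t2).sub t3
      simpa using h
    have h4 : ‖z‖ ^ 2 ≤ 0 := ge_of_tendsto' h3 h2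
    have h5 : ‖z‖ ^ 2 = 0 := le_antisymm h4 (by positivity)
    have h6 : z = 0 := by
      have := pow_eq_zero_iff (n := 2) (by norm_num) |>.mp h5
      exact norm_eq_zero.mp this
    rw [hz] at h6
    exact (sub_eq_zero.mp h6).symm
  -- pick an ultrafilter extending atTop and get the weak limit
  obtain ⟨U₀, hU₀⟩ := Ultrafilter.exists_le (atTop : Filter ℕ)
  obtain ⟨w, hw⟩ := exists_weak_lim x R hR U₀
  have hTw : T w = w := hdemi U₀ hU₀ w hw
  -- convergence of distances to fixed points
  have hlim : ∀ r : H, T r = r → ∃ L : ℝ, Tendsto (fun n => ‖x n - r‖) atTop (nhds L) := by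
    intro r hr
    refine ⟨⨅ n, ‖x n - r‖, tendsto_atTop_ciInf (hanti r hr) ⟨0, ?_⟩⟩
    rintro - ⟨n, rfl⟩; exact norm_nonneg _
  -- uniqueness of weak cluster points among fixed points
  have huniq : ∀ (U' : Ultrafilter ℕ), ↑U' ≤ (atTop : Filter ℕ) → ∀ w' : H,
      (∀ v, Tendsto (fun n => ⟪x n, v⟫) ↑U' (nhds ⟪w', v⟫)) → T w' = w' → w' = w := by
    intro U' hU' w' hw' hTw'
    obtain ⟨L1, hL1⟩ := hlim w hTw
    obtain ⟨L2, hL2⟩ := hlim w' hTw'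
    have hg : ∀ n, ⟪x n, w - w'⟫
        = (‖x n - w'‖ ^ 2 - ‖x n - w‖ ^ 2 - ‖w'‖ ^ 2 + ‖w‖ ^ 2) / 2 := by
      intro n
      have e1 := norm_sub_sq_real (x n) w
      have e2 := norm_sub_sq_real (x n) w'
      have e3 : ⟪x n, w - w'⟫ = ⟪x n, w⟫ - ⟪x n, w'⟫ := inner_sub_right _ _ _
      linarith
    set L : ℝ := (L2 ^ 2 - L1 ^ 2 - ‖w'‖ ^ 2 + ‖w‖ ^ 2) / 2 with hLdef
    have hgt : Tendsto (fun n => ⟪x n, w - w'⟫) atTop (nhds L) := by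
      have t1 : Tendsto (fun n => (‖x n - w'‖ ^ 2 - ‖x n - w‖ ^ 2 - ‖w'‖ ^ 2 + ‖w‖ ^ 2) / 2)
          atTop (nhds L) := by
        rw [hLdef]
        exact ((((hL2.pow 2).sub (hL1.pow 2)).sub_const _).add_const _).div_const 2
      exact t1.congr (fun n => (hg n).symm)
    have hA : ⟪w, w - w'⟫ = L := tendsto_nhds_unique (hw (w - w')) (hgt.mono_left hU₀)
    have hB : ⟪w', w - w'⟫ = L := tendsto_nhds_unique (hw' (w - w')) (hgt.mono_left hU')
    have hz : ⟪w - w', w - w'⟫ = (0:ℝ) := by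
      rw [inner_sub_left]; rw [hA, hB]; ring
    have : w - w' = 0 := inner_self_eq_zero.mp hz
    exact (sub_eq_zero.mp this).symm
  -- conclusion
  refine ⟨w, hTw, fun v => ?_⟩
  by_contra hcon
  rw [Metric.tendsto_atTop] at hcon
  push_neg at hcon
  obtain ⟨ε, hε, hcon⟩ := hcon
  have hfr : ∃ᶠ n in (atTop : Filter ℕ), ε ≤ dist ⟪x n, v⟫ ⟪w, v⟫ := by
    rw [frequently_atTop]
    intro N; obtain ⟨n, hn, h⟩ := hcon N; exact ⟨n, hn, h⟩
  have hne : NeBot ((atTop : Filter ℕ)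
      ⊓ Filter.principal {n | ε ≤ dist ⟪x n, v⟫ ⟪w, v⟫}) :=
    frequently_iff_neBot.mp hfr
  obtain ⟨U', hU'le⟩ := @Ultrafilter.exists_le ℕ _ hne
  have hU'atTop : ↑U' ≤ (atTop : Filter ℕ) := hU'le.trans inf_le_left
  have hS : {n | ε ≤ dist ⟪x n, v⟫ ⟪w, v⟫} ∈ U' :=
    hU'le (Filter.mem_inf_of_right (Filter.mem_principal_self _))
  obtain ⟨w', hw'⟩ := exists_weak_lim x R hR U'
  have hTw' : T w' = w' := hdemi U' hU'atTop w' hw'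
  have hww : w' = w := huniq U' hU'atTop w' hw' hTw'
  have hdist : Tendsto (fun n => dist ⟪x n, v⟫ ⟪w, v⟫) ↑U' (nhds 0) := by
    have h := (hw' v).dist (tendsto_const_nhds (x := ⟪w, v⟫) (f := (↑U' : Filter ℕ)))
    rw [hww] at h
    simpa using h
  have hev : ∀ᶠ n in (↑U' : Filter ℕ), ε ≤ dist ⟪x n, v⟫ ⟪w, v⟫ := hS
  have : ε ≤ 0 := ge_of_tendsto hdist hev
  linarith
end
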